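/- arXiv:2206.05884 — 7 statements merged into one kernel-verified Lean document; each statement's English description precedes it below -/
import Mathlib

section
/- For integers t ≥ 2 and r ≥ 2, if n = a(r+t-2)+b with 0 ≤ b ≤ r+t-3, then the r-uniform hypergraph on n vertices consisting of a disjoint cliques on r+t-2 vertices plus one clique on b vertices contains no trace of the star K_{1,t}; hence ex_r(n, Tr(K_{1,t})) ≥ a·C(r+t-2, r) + C(b, r). -/
/-!
Split `Fin n` into `a` blocks of `m = r + t - 2` consecutive vertices and one block of `b`
vertices, and take all `r`-subsets of each block. Every edge through a vertex `v` lies in the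
block of `v`, so the edges through `v` cover at most `m` vertices. A trace of `K_{1,t}` centred at
`w0`, however, needs `r + t - 1` vertices on edges through `w0`: one of its edges `f i₀` and the
`t - 1` other leaves, which avoid `f i₀` because `f i₀` meets the trace's base set only in its
own two vertices.
-/

/-- An `r`-uniform hypergraph. -/
def IsUniform (r : ℕ) {V : Type*} (H : Finset (Finset V)) : Prop :=
  ∀ e ∈ H, e.card = r

/-- `H` contains the star `K_{1,t}` as a trace: there are distinct base vertices
`w0, w 0, …, w (t-1)` and distinct hyperedges `f i` with
`f i ∩ {w0, w 0, …, w (t-1)} = {w0, w i}`. -/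
def HasStarTrace (t : ℕ) {V : Type*} [DecidableEq V] (H : Finset (Finset V)) : Prop :=
  ∃ (w0 : V) (w : Fin t → V) (f : Fin t → Finset V),
    Function.Injective w ∧ (∀ i, w i ≠ w0) ∧ Function.Injective f ∧
    (∀ i, f i ∈ H) ∧
    ∀ i, f i ∩ insert w0 (Finset.image w Finset.univ) = {w0, w i}

open Finset

section StarTrace

variable {V : Type*} [DecidableEq V]

def closedNbhd (H : Finset (Finset V)) (v : V) : Finset V :=
  {e ∈ H | v ∈ e}.biUnion id

lemma subset_closedNbhd {H : Finset (Finset V)} {e : Finset V} {v : V} (he : e ∈ H) (hv : v ∈ e) :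
    e ⊆ closedNbhd H v :=
  subset_biUnion_of_mem id (mem_filter.2 ⟨he, hv⟩)

theorem HasStarTrace.exists_card_closedNbhd_ge {r t : ℕ} {H : Finset (Finset V)}
    (hH : IsUniform r H) (ht : 0 < t) (h : HasStarTrace t H) :
    ∃ v, r + t - 1 ≤ #(closedNbhd H v) := by
  obtain ⟨w0, w, f, hw, hw0, -, hfH, hf⟩ := h
  have hmem (i : Fin t) : w0 ∈ f i ∧ w i ∈ f i := by
    have h0 : w0 ∈ f i ∩ insert w0 (image w univ) := by simp [hf i]
    have h1 : w i ∈ f i ∩ insert w0 (image w univ) := by simp [hf i]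
    exact ⟨(mem_inter.1 h0).1, (mem_inter.1 h1).1⟩
  let i₀ : Fin t := ⟨0, ht⟩
  have hleaves : Disjoint (f i₀) ((univ.erase i₀).image w) := by
    refine disjoint_right.2 ?_
    rintro _ hx hx₀
    obtain ⟨i, hi, rfl⟩ := mem_image.1 hx
    have : w i ∈ ({w0, w i₀} : Finset V) := by
      rw [← hf i₀]; exact mem_inter.2 ⟨hx₀, mem_insert_of_mem (mem_image_of_mem w (mem_univ i))⟩
    rcases mem_insert.1 this with h | h
    · exact hw0 i h
    · exact (mem_erase.1 hi).1 (hw (mem_singleton.1 h))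
  refine ⟨w0, ?_⟩
  calc r + t - 1 = #(f i₀ ∪ (univ.erase i₀).image w) := by
        rw [card_union_of_disjoint hleaves, hH _ (hfH i₀), card_image_of_injective _ hw,
          card_erase_of_mem (mem_univ _), card_univ, Fintype.card_fin]
        omega
    _ ≤ #(closedNbhd H w0) := by
        refine card_le_card (union_subset (subset_closedNbhd (hfH i₀) (hmem i₀).1) ?_)
        simp only [image_subset_iff]
        exact fun i _ => subset_closedNbhd (hfH i) (hmem i).1 (hmem i).2

end StarTrace

section CliqueUnion

variable {V ι : Type*} [DecidableEq V] (s : Finset ι) (B : ι → Finset V) (r : ℕ)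

def cliqueUnion : Finset (Finset V) :=
  s.biUnion fun i => (B i).powersetCard r

lemma isUniform_cliqueUnion : IsUniform r (cliqueUnion s B r) := by
  intro e he
  obtain ⟨i, -, hi⟩ := mem_biUnion.1 he
  exact (mem_powersetCard.1 hi).2

variable {s B r}

lemma card_cliqueUnion (hB : (s : Set ι).PairwiseDisjoint B) (hr : r ≠ 0) :
    #(cliqueUnion s B r) = ∑ i ∈ s, (#(B i)).choose r := by
  rw [cliqueUnion, card_biUnion]
  · simp only [card_powersetCard]
  · intro i hi j hj hij
    refine disjoint_left.2 fun e hei hej => ?_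
    rw [mem_powersetCard] at hei hej
    obtain ⟨v, hv⟩ : e.Nonempty := card_pos.1 (by omega)
    exact disjoint_left.1 (hB hi hj hij) (hei.1 hv) (hej.1 hv)

lemma card_closedNbhd_cliqueUnion_le {m : ℕ} (hB : (s : Set ι).PairwiseDisjoint B)
    (hm : ∀ i ∈ s, #(B i) ≤ m) (v : V) : #(closedNbhd (cliqueUnion s B r) v) ≤ m := by
  have hblock : ∀ e ∈ {e ∈ cliqueUnion s B r | v ∈ e}, ∃ i ∈ s, e ⊆ B i ∧ v ∈ B i := by
    intro e he
    obtain ⟨he, hve⟩ := mem_filter.1 he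
    obtain ⟨i, hi, hei⟩ := mem_biUnion.1 he
    have hei := (mem_powersetCard.1 hei).1
    exact ⟨i, hi, hei, hei hve⟩
  rcases eq_empty_or_nonempty {e ∈ cliqueUnion s B r | v ∈ e} with hempty | ⟨e₀, he₀⟩
  · simp [closedNbhd, hempty]
  obtain ⟨i, hi, -, hvi⟩ := hblock e₀ he₀
  refine (card_le_card (biUnion_subset.2 fun e he => ?_)).trans (hm i hi)
  obtain ⟨j, hj, hej, hvj⟩ := hblock e he
  obtain rfl : j = i := hB.elim hj hi (not_disjoint_iff.2 ⟨v, hvj, hvi⟩)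
  exact hej

lemma not_hasStarTrace_cliqueUnion {m t : ℕ} (hB : (s : Set ι).PairwiseDisjoint B)
    (hm : ∀ i ∈ s, #(B i) ≤ m) (ht : 0 < t) (hmt : m < r + t - 1) :
    ¬ HasStarTrace t (cliqueUnion s B r) := fun h =>
  have ⟨v, hv⟩ := h.exists_card_closedNbhd_ge (isUniform_cliqueUnion s B r) ht
  (card_closedNbhd_cliqueUnion_le hB hm v).not_gt (hmt.trans_le hv)

end CliqueUnion

theorem Fin.card_filter_val_div_eq {n : ℕ} (m i : ℕ) (hm : 0 < m) :
    #{v : Fin n | (v : ℕ) / m = i} = min m (n - m * i) := by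
  have hval : {k ∈ Iio n | k / m = i} = Ico (m * i) (min n (m * i + m)) := by
    ext k
    simp only [mem_filter, mem_Iio, mem_Ico, Nat.div_eq_iff hm, Nat.mul_comm i m, lt_min_iff]
    omega
  change #(filter ((· / m = i) ∘ Fin.valEmbedding) univ) = _
  rw [← card_map Fin.valEmbedding, ← filter_map, Fin.map_valEmbedding_univ, hval, Nat.card_Ico]
  omega

/-- if `n = a(r+t-2)+b`, `b ≤ r+t-3`, there is an `n`-vertex `r`-uniform
hypergraph (disjoint cliques) with no trace of `K_{1,t}` and
`a·C(r+t-2,r) + C(b,r)` edges; hence `ex_r(n, Tr(K_{1,t}))` is at least this. -/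
theorem stmt_1 (r t a b n : ℕ) (hr : 2 ≤ r) (ht : 2 ≤ t)
    (hn : n = a * (r + t - 2) + b) (hb : b ≤ r + t - 3) :
    ∃ H : Finset (Finset (Fin n)), IsUniform r H ∧ ¬ HasStarTrace t H ∧
      H.card = a * (r + t - 2).choose r + b.choose r := by
  set m := r + t - 2
  have hm : 0 < m := by omega
  let B (i : ℕ) : Finset (Fin n) := {v | (v : ℕ) / m = i}
  have hB : ((range (a + 1) : Finset ℕ) : Set ℕ).PairwiseDisjoint B :=
    Set.pairwiseDisjoint_filter _ _ _
  have hBcard (i : ℕ) : #(B i) = min m (n - m * i) := Fin.card_filter_val_div_eq m i hm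
  refine ⟨cliqueUnion (range (a + 1)) B r, isUniform_cliqueUnion _ _ _,
    not_hasStarTrace_cliqueUnion hB (fun i _ => (hBcard i).trans_le (min_le_left _ _))
      (by omega) (by omega), ?_⟩
  have hfull : ∀ i ∈ range a, (#(B i)).choose r = m.choose r := fun i hi => by
    have : m * i + m ≤ m * a := Nat.mul_succ m i ▸ Nat.mul_le_mul_left m (mem_range.1 hi)
    rw [hBcard, min_eq_left (by rw [hn, Nat.mul_comm a m]; omega)]
  have hlast : #(B a) = b := by
    rw [hBcard, hn, Nat.mul_comm a m]
    omega
  rw [card_cliqueUnion hB (by omega), sum_range_succ, sum_congr rfl hfull, sum_const, card_range,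
    smul_eq_mul, hlast]
end

section
/- Let r ≥ 2, t ≥ 2, and suppose n = a(r+t-1) + b with 0 ≤ b ≤ r+t-2. If there exists an (r-1)-(r+t-1, r, 1) covering design of size c, then ex_r(n, Tr(K_{1,t})) ≥ a·(C(r+t-1, r) − c) + C(b, r). -/
/-!
In an `r`-graph, each of the `t` edges of a trace of `K_{1,t}` contains the centre and its own
leaf and avoids the other `t - 1` leaves, so it needs `r + t - 1` vertices. Since all these edges
contain the centre, a star trace in a vertex-disjoint union lies in one component. Hence the
complete `r`-graph on `b < r + t - 1` vertices is trace-free, and so is the complete `r`-graph on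
`r + t - 1` vertices minus an `(r-1)`-covering, and disjoint unions of these add their sizes.
-/

open Finset Function

theorem IsUniform.mono {V : Type*} {r : ℕ} {H H' : Finset (Finset V)} (hH : IsUniform r H)
    (h : H' ⊆ H) : IsUniform r H' := fun e he => hH e (h he)

theorem isUniform_powersetCard {V : Type*} {r : ℕ} (s : Finset V) :
    IsUniform r (powersetCard r s) :=
  fun _ he => (mem_powersetCard.1 he).2

section StarTrace

variable {V W : Type*} [DecidableEq V] [DecidableEq W] {r t : ℕ}

def HasStarTraceAt (t : ℕ) (H : Finset (Finset V)) (w₀ : V) : Prop :=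
  ∃ (w : Fin t → V) (f : Fin t → Finset V),
    Injective w ∧ (∀ i, w i ≠ w₀) ∧ Injective f ∧ (∀ i, f i ∈ H) ∧
    ∀ i, f i ∩ insert w₀ (image w univ) = {w₀, w i}

theorem hasStarTrace_iff {H : Finset (Finset V)} :
    HasStarTrace t H ↔ ∃ w₀, HasStarTraceAt t H w₀ := Iff.rfl

section Edge

variable {w₀ : V} {w : Fin t → V} {e : Finset V} {i : Fin t}

theorem center_mem_of_inter_eq (he : e ∩ insert w₀ (image w univ) = {w₀, w i}) : w₀ ∈ e :=
  (mem_inter.1 (he.symm ▸ mem_insert_self w₀ {w i})).1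

theorem leaf_mem_iff_of_inter_eq (hw : Injective w) (hw₀ : ∀ j, w j ≠ w₀)
    (he : e ∩ insert w₀ (image w univ) = {w₀, w i}) (j : Fin t) : w j ∈ e ↔ j = i := by
  have hS : w j ∈ insert w₀ (image w univ) := mem_insert_of_mem (mem_image_of_mem w (mem_univ j))
  have : w j ∈ e ↔ w j ∈ e ∩ insert w₀ (image w univ) := by simp [hS]
  rw [this, he]
  simp [hw₀ j, hw.eq_iff]

/-- The edge avoids the other `t - 1` leaves, and only `r` vertices remain. -/
theorem eq_insert_compl_of_inter_eq [Fintype V] (hV : Fintype.card V = r + t - 1)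
    (hw : Injective w) (hw₀ : ∀ j, w j ≠ w₀) (he : e ∩ insert w₀ (image w univ) = {w₀, w i})
    (hcard : e.card = r) : e = insert (w i) (image w univ)ᶜ := by
  have hwi : w i ∈ image w univ := mem_image_of_mem w (mem_univ i)
  refine eq_of_subset_of_card_le (fun v hv => ?_) ?_
  · by_cases hvw : v ∈ image w univ
    · obtain ⟨j, -, rfl⟩ := mem_image.1 hvw
      rw [(leaf_mem_iff_of_inter_eq hw hw₀ he j).1 hv]
      exact mem_insert_self _ _
    · exact mem_insert_of_mem (mem_compl.2 hvw)
  · have htV := Fintype.card_le_of_injective w hw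
    rw [card_insert_of_notMem (fun h => mem_compl.1 h hwi), card_compl,
      card_image_of_injective _ hw, card_univ, Fintype.card_fin, hcard]
    have := i.pos
    simp only [Fintype.card_fin] at htV
    omega

end Edge

theorem HasStarTraceAt.comap {H : Finset (Finset V)} {H' : Finset (Finset W)} (φ : W ↪ V)
    {x : W} (hH : ∀ f ∈ H, φ x ∈ f → ∃ g ∈ H', g.map φ = f) (h : HasStarTraceAt t H (φ x)) :
    HasStarTraceAt t H' x := by
  obtain ⟨w, f, hw, hw₀, hf, hfH, hfw⟩ := h
  choose g hgH hgf using fun i => hH (f i) (hfH i) (center_mem_of_inter_eq (hfw i))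
  have hleaf : ∀ i, ∃ y, φ y = w i := fun i => by
    have := (leaf_mem_iff_of_inter_eq hw hw₀ (hfw i) i).2 rfl
    rw [← hgf i] at this
    obtain ⟨y, -, hy⟩ := mem_map.1 this
    exact ⟨y, hy⟩
  choose y hy using hleaf
  have hwy : w = φ ∘ y := funext fun i => (hy i).symm
  subst hwy
  refine ⟨y, g, hw.of_comp, fun i h => hw₀ i (congrArg φ h), fun i j hij => hf ?_,
    hgH, fun i => map_injective φ ?_⟩
  · rw [← hgf i, ← hgf j, hij]
  · rw [map_inter, map_insert, hgf i]
    simpa [map_eq_image, image_image] using hfw i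

theorem HasStarTrace.of_image_map_equiv {H : Finset (Finset V)} (e : V ≃ W)
    (h : HasStarTrace t (H.image (map e.toEmbedding))) : HasStarTrace t H := by
  obtain ⟨w₀, h⟩ := hasStarTrace_iff.1 h
  refine ⟨e.symm w₀, HasStarTraceAt.comap e.toEmbedding (fun f hf _ => ?_) (by simpa using h)⟩
  simpa using hf

def sumHypergraph (H₁ : Finset (Finset V)) (H₂ : Finset (Finset W)) :
    Finset (Finset (V ⊕ W)) :=
  H₁.image (map .inl) ∪ H₂.image (map .inr)

variable {H₁ : Finset (Finset V)} {H₂ : Finset (Finset W)}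

theorem IsUniform.sumHypergraph (h₁ : IsUniform r H₁) (h₂ : IsUniform r H₂) :
    IsUniform r (sumHypergraph H₁ H₂) := by
  intro e he
  rcases mem_union.1 he with he | he <;> obtain ⟨g, hg, rfl⟩ := mem_image.1 he
  exacts [(card_map _).trans (h₁ g hg), (card_map _).trans (h₂ g hg)]

theorem card_sumHypergraph (hr : 0 < r) (h₁ : IsUniform r H₁) :
    (sumHypergraph H₁ H₂).card = H₁.card + H₂.card := by
  rw [sumHypergraph, card_union_of_disjoint, card_image_of_injective _ (map_injective _),
    card_image_of_injective _ (map_injective _)]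
  refine disjoint_left.2 fun e he₁ he₂ => ?_
  obtain ⟨g₁, hg₁, rfl⟩ := mem_image.1 he₁
  obtain ⟨g₂, -, hg⟩ := mem_image.1 he₂
  obtain ⟨v, hv⟩ := card_pos.1 (hr.trans_eq (h₁ g₁ hg₁).symm)
  have : Sum.inl v ∈ g₂.map .inr := hg ▸ mem_map_of_mem .inl hv
  simp at this

theorem not_hasStarTrace_sumHypergraph (h₁ : ¬ HasStarTrace t H₁) (h₂ : ¬ HasStarTrace t H₂) :
    ¬ HasStarTrace t (sumHypergraph H₁ H₂) := by
  rintro ⟨w₀ | w₀, h⟩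
  · refine h₁ ⟨w₀, HasStarTraceAt.comap .inl (fun f hf hw₀ => ?_) h⟩
    rcases mem_union.1 hf with hf | hf <;> obtain ⟨g, hg, rfl⟩ := mem_image.1 hf
    exacts [⟨g, hg, rfl⟩, by simp at hw₀]
  · refine h₂ ⟨w₀, HasStarTraceAt.comap .inr (fun f hf hw₀ => ?_) h⟩
    rcases mem_union.1 hf with hf | hf <;> obtain ⟨g, hg, rfl⟩ := mem_image.1 hf
    exacts [by simp at hw₀, ⟨g, hg, rfl⟩]

theorem HasStarTraceAt.card_add_le [Fintype V] {H : Finset (Finset V)} {w₀ : V}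
    (hH : IsUniform r H) (h : HasStarTraceAt t H w₀) (ht : 0 < t) :
    r + (t - 1) ≤ Fintype.card V := by
  obtain ⟨w, f, hw, hw₀, -, hfH, hfw⟩ := h
  set i : Fin t := ⟨0, ht⟩
  have hdisj : Disjoint (f i) ((univ.erase i).image w) := disjoint_left.2 fun v hv hvw => by
    obtain ⟨j, hj, rfl⟩ := mem_image.1 hvw
    exact ne_of_mem_erase hj ((leaf_mem_iff_of_inter_eq hw hw₀ (hfw i) j).1 hv)
  calc r + (t - 1) = (f i ∪ (univ.erase i).image w).card := by
        rw [card_union_of_disjoint hdisj, hH _ (hfH i), card_image_of_injective _ hw,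
          card_erase_of_mem (mem_univ i), card_univ, Fintype.card_fin]
    _ ≤ Fintype.card V := card_le_univ _

theorem not_hasStarTrace_powersetCard [Fintype V] (ht : 0 < t)
    (hV : Fintype.card V < r + t - 1) : ¬ HasStarTrace t (powersetCard r (univ : Finset V)) := by
  rintro ⟨w₀, h⟩
  have := HasStarTraceAt.card_add_le (isUniform_powersetCard _) h ht
  omega

/-- All `t` edges of a star trace are `Q ∪ {leaf}` with `Q` the `r - 1` non-leaves, and the
covering contains one of them, since it contains an `r`-set through `Q`. -/
theorem not_hasStarTrace_powersetCard_sdiff [Fintype V] (ht : 0 < t)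
    (hV : Fintype.card V = r + t - 1) {C : Finset (Finset V)} (hC : ∀ e ∈ C, e.card = r)
    (hcov : ∀ s : Finset V, s.card = r - 1 → ∃ e ∈ C, s ⊆ e) :
    ¬ HasStarTrace t (powersetCard r univ \ C) := by
  rintro ⟨w₀, w, f, hw, hw₀, -, hfH, hfw⟩
  set Q := (image w univ)ᶜ
  have htV := Fintype.card_le_of_injective w hw
  simp only [Fintype.card_fin] at htV
  have hQ : Q.card = r - 1 := by
    rw [card_compl, card_image_of_injective _ hw, card_univ, Fintype.card_fin]
    omega
  obtain ⟨e, heC, hQe⟩ := hcov Q hQ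
  obtain ⟨x, hx⟩ : (e \ Q).Nonempty := by
    rw [← card_pos, card_sdiff_of_subset hQe, hC e heC, hQ]
    omega
  obtain ⟨hxe, hxQ⟩ := mem_sdiff.1 hx
  obtain ⟨i, -, rfl⟩ := mem_image.1 (notMem_compl.1 hxQ)
  have he : e = insert (w i) Q := by
    refine (eq_of_subset_of_card_le (insert_subset hxe hQe) ?_).symm
    rw [card_insert_of_notMem hxQ, hQ, hC e heC]
    omega
  have hfi := mem_sdiff.1 (hfH i)
  apply hfi.2
  rwa [eq_insert_compl_of_inter_eq hV hw hw₀ (hfw i) (mem_powersetCard.1 hfi.1).2, ← he]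

end StarTrace

/-- `k ≤ ex_r(n, Tr(K_{1,t}))`. -/
def LeExStarTrace (r t k n : ℕ) : Prop :=
  ∃ H : Finset (Finset (Fin n)), IsUniform r H ∧ ¬ HasStarTrace t H ∧ k ≤ H.card

namespace LeExStarTrace

variable {r t k k₁ k₂ n₁ n₂ : ℕ}

theorem of_fintype {V : Type*} [Fintype V] [DecidableEq V] {H : Finset (Finset V)}
    (hH : IsUniform r H) (hfree : ¬ HasStarTrace t H) (hk : k ≤ H.card) :
    LeExStarTrace r t k (Fintype.card V) := by
  set e := Fintype.equivFin V
  refine ⟨H.image (map e.toEmbedding), fun f hf => ?_, fun h => hfree (h.of_image_map_equiv e),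
    hk.trans_eq (card_image_of_injective _ (map_injective _)).symm⟩
  obtain ⟨g, hg, rfl⟩ := mem_image.1 hf
  exact (card_map _).trans (hH g hg)

theorem zero : LeExStarTrace r t 0 0 :=
  ⟨∅, fun _ h => absurd h (notMem_empty _), fun ⟨w₀, _⟩ => w₀.elim0, le_rfl⟩

theorem add (hr : 0 < r) (h₁ : LeExStarTrace r t k₁ n₁) (h₂ : LeExStarTrace r t k₂ n₂) :
    LeExStarTrace r t (k₁ + k₂) (n₁ + n₂) := by
  obtain ⟨H₁, hH₁, hfree₁, hk₁⟩ := h₁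
  obtain ⟨H₂, hH₂, hfree₂, hk₂⟩ := h₂
  simpa using of_fintype (hH₁.sumHypergraph hH₂) (not_hasStarTrace_sumHypergraph hfree₁ hfree₂)
    ((add_le_add hk₁ hk₂).trans_eq (card_sumHypergraph hr hH₁).symm)

theorem mul (hr : 0 < r) (h : LeExStarTrace r t k₁ n₁) (a : ℕ) :
    LeExStarTrace r t (a * k₁) (a * n₁) := by
  induction a with
  | zero => simpa using zero
  | succ a ih => simpa [add_mul] using ih.add hr h

end LeExStarTrace

/-- if `n = a(r+t-1)+b` with `b ≤ r+t-2` and there is an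
`(r-1)`-`(r+t-1, r, 1)` covering design of size `c`, then
`ex_r(n, Tr(K_{1,t})) ≥ a·(C(r+t-1,r) − c) + C(b,r)`. -/
theorem stmt_2 (r t a b c n : ℕ) (hr : 2 ≤ r) (ht : 2 ≤ t)
    (hn : n = a * (r + t - 1) + b) (hb : b ≤ r + t - 2)
    (hcov : ∃ C : Finset (Finset (Fin (r + t - 1))),
      C.card = c ∧ (∀ e ∈ C, e.card = r) ∧
      ∀ s : Finset (Fin (r + t - 1)), s.card = r - 1 → ∃ e ∈ C, s ⊆ e) :
    ∃ H : Finset (Finset (Fin n)), IsUniform r H ∧ ¬ HasStarTrace t H ∧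
      a * ((r + t - 1).choose r - c) + b.choose r ≤ H.card := by
  obtain ⟨C, hCc, hC, hcov⟩ := hcov
  have hblock : LeExStarTrace r t ((r + t - 1).choose r - c) (r + t - 1) := by
    have hk := le_card_sdiff C (powersetCard r (univ : Finset (Fin (r + t - 1))))
    rw [card_powersetCard, card_univ, Fintype.card_fin, hCc] at hk
    simpa using LeExStarTrace.of_fintype ((isUniform_powersetCard _).mono sdiff_subset)
      (not_hasStarTrace_powersetCard_sdiff (by omega) (Fintype.card_fin _) hC hcov) hk
  have hrest : LeExStarTrace r t (b.choose r) b := by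
    simpa using LeExStarTrace.of_fintype (isUniform_powersetCard _)
      (not_hasStarTrace_powersetCard (V := Fin b) (by omega) (by rw [Fintype.card_fin]; omega))
      (card_powersetCard r (univ : Finset (Fin b))).ge
  exact hn ▸ (hblock.mul (by omega) a).add (by omega) hrest
end

section
/- Let H be an r-uniform hypergraph whose vertex set is partitioned into components each of which is a complete r-uniform hypergraph on r+t-1 vertices from which an (r-1)-(r+t-1,r,1) covering has been removed. Then H contains no trace of the star K_{1,t}. -/
/-- an `r`-uniform hypergraph whose vertex set is partitioned into
components, each a complete `r`-uniform hypergraph on `r+t-1` vertices with an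
`(r-1)`-`(r+t-1,r,1)` covering removed, contains no trace of `K_{1,t}`. -/
theorem stmt_3 {V : Type*} [Fintype V] [DecidableEq V] (r t : ℕ)
    (hr : 2 ≤ r) (ht : 2 ≤ t)
    (P : Finset (Finset V))
    (hdisj : ∀ p ∈ P, ∀ q ∈ P, p ≠ q → Disjoint p q)
    (hcover : ∀ v : V, ∃ p ∈ P, v ∈ p)
    (hsize : ∀ p ∈ P, p.card = r + t - 1)
    (cov : Finset V → Finset (Finset V))
    (hcovsub : ∀ p ∈ P, ∀ e ∈ cov p, e ⊆ p ∧ e.card = r)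
    (hcovering : ∀ p ∈ P, ∀ s : Finset V, s ⊆ p → s.card = r - 1 → ∃ e ∈ cov p, s ⊆ e)
    (H : Finset (Finset V))
    (hH : ∀ e : Finset V, e ∈ H ↔ ∃ p ∈ P, e ⊆ p ∧ e.card = r ∧ e ∉ cov p) :
    ¬ HasStarTrace t H := by
  rintro ⟨w0, w, f, hwinj, hw0, hfinj, hfH, hfint⟩
  set W : Finset V := insert w0 (Finset.image w Finset.univ) with hW
  have hWcard : W.card = t + 1 := by
    rw [hW, Finset.card_insert_of_notMem, Finset.card_image_of_injective _ hwinj,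
      Finset.card_univ, Fintype.card_fin]
    simp only [Finset.mem_image, Finset.mem_univ, true_and]
    rintro ⟨i, hi⟩; exact hw0 i hi
  have ht0 : 0 < t := by omega
  have hmem : ∀ i, ∃ p ∈ P, f i ⊆ p ∧ (f i).card = r ∧ f i ∉ cov p := fun i => (hH _).mp (hfH i)
  have hw0f : ∀ i, w0 ∈ f i := by
    intro i
    have h : w0 ∈ f i ∩ W := by rw [hfint i]; simp
    exact (Finset.mem_inter.mp h).1
  have hwif : ∀ i, w i ∈ f i := by
    intro i
    have h : w i ∈ f i ∩ W := by rw [hfint i]; simp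
    exact (Finset.mem_inter.mp h).1
  obtain ⟨p, hpP, hfp, hfc, hfcov⟩ := hmem ⟨0, ht0⟩
  have hpuniq : ∀ p' ∈ P, w0 ∈ p' → p' = p := by
    intro p' hp' hw0p'
    by_contra hne
    exact Finset.disjoint_left.mp (hdisj p' hp' p hpP hne) hw0p' (hfp (hw0f ⟨0, ht0⟩))
  have hfip : ∀ i, f i ⊆ p := by
    intro i
    obtain ⟨p', hp', hsub, _, _⟩ := hmem i
    rw [← hpuniq p' hp' (hsub (hw0f i))]; exact hsub
  have hWp : W ⊆ p := by
    intro x hx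
    rw [hW] at hx
    rcases Finset.mem_insert.mp hx with h | h
    · subst h; exact hfp (hw0f ⟨0, ht0⟩)
    · obtain ⟨i, _, rfl⟩ := Finset.mem_image.mp h
      exact hfip i (hwif i)
  have hpcard := hsize p hpP
  have hdiffcard : (p \ W).card = r - 2 := by
    rw [Finset.card_sdiff_of_subset hWp, hpcard, hWcard]; omega
  set s : Finset V := insert w0 (p \ W) with hs
  have hw0nd : w0 ∉ p \ W := by simp [hW]
  have hscard : s.card = r - 1 := by
    rw [hs, Finset.card_insert_of_notMem hw0nd, hdiffcard]; omega
  have hsp : s ⊆ p := by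
    rw [hs]; intro x hx
    rcases Finset.mem_insert.mp hx with h | h
    · subst h; exact hWp (by simp [hW])
    · exact (Finset.mem_sdiff.mp h).1
  obtain ⟨e, hecov, hse⟩ := hcovering p hpP s hsp hscard
  obtain ⟨hep, hecard⟩ := hcovsub p hpP e hecov
  have hesd : (e \ s).card = 1 := by rw [Finset.card_sdiff_of_subset hse, hecard, hscard]; omega
  obtain ⟨x, hxes⟩ := Finset.card_eq_one.mp hesd
  have hxe : x ∈ e \ s := by rw [hxes]; simp
  obtain ⟨hxine, hxns⟩ := Finset.mem_sdiff.mp hxe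
  have hein : e = insert x s := by
    symm
    apply Finset.eq_of_subset_of_card_le
    · intro y hy
      rcases Finset.mem_insert.mp hy with h | h
      · subst h; exact hxine
      · exact hse h
    · rw [Finset.card_insert_of_notMem hxns, hecard, hscard]; omega

  have hxW : x ∈ W := by
    have hxp : x ∈ p := hep hxine
    by_contra hxW
    exact hxns (by rw [hs]; exact Finset.mem_insert_of_mem (Finset.mem_sdiff.mpr ⟨hxp, hxW⟩))
  have hxnw0 : x ≠ w0 := by
    intro h; exact hxns (by rw [hs, h]; exact Finset.mem_insert_self _ _)
  obtain ⟨j, -, hj⟩ : ∃ i ∈ Finset.univ, w i = x := by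
    rw [hW] at hxW
    rcases Finset.mem_insert.mp hxW with h | h
    · exact absurd h hxnw0
    · exact Finset.mem_image.mp h
  -- now show f j = e
  have hfjW : f j \ W = p \ W := by
    apply Finset.eq_of_subset_of_card_le
    · exact Finset.sdiff_subset_sdiff (hfip j) le_rfl
    · have h1 : (f j ∩ W).card + (f j \ W).card = (f j).card :=
        Finset.card_inter_add_card_sdiff _ _
      have h2 : (f j ∩ W).card = 2 := by
        rw [hfint j, Finset.card_insert_of_notMem (by simp [Ne.symm (hw0 j)]),
          Finset.card_singleton]
      obtain ⟨_, _, _, hc, _⟩ := hmem j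
      omega
  have hfje : f j = e := by
    have h1 : f j = (f j \ W) ∪ (f j ∩ W) := (Finset.sdiff_union_inter _ _).symm
    rw [h1, hfint j, hfjW, hein, hs, ← hj]
    ext y
    simp only [Finset.mem_union, Finset.mem_insert, Finset.mem_singleton]
    tauto
  obtain ⟨p', hp', hsub', _, hncov'⟩ := hmem j
  rw [hpuniq p' hp' (hsub' (hw0f j))] at hncov'
  exact hncov' (hfje ▸ hecov)
end

section
/- For t ≥ 2 with t+2 ≡ 0 (mod 6) and n divisible by t+2, ex_3(n, Tr(K_{1,t})) = n(t²−2)/6. -/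
/-!
Upper bound: the link of a vertex `v` (the pairs `e \ {v}` for edges `e ∋ v`) is a graph in
which no `t` edges have private vertices, since such edges would be a trace of `K_{1,t}` centred
at `v`. A set of private vertices is one whose vertices all have a neighbour outside it, i.e. the
complement of a dominating set, so Vizing's bound `⌊f (f + 2) / 2⌋` on the edges of a graph with
`n - γ ≤ f` applies, with his induction on a vertex of maximum degree. For `f = t - 1` and even
`t` this is `(t² - 2) / 2`, and summing over `v` gives `6 |H| ≤ n (t² - 2)`.

Lower bound: split the vertices into blocks of size `t + 2` and take, inside each block, all
triples except those of a covering `C` of its pairs by `(t + 2)² / 6` triples. A trace of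
`K_{1,t}` with centre `w₀` fills a block up to one vertex `u`, so its edges are the triples
`{u, w₀, wᵢ}`; the covering triple through `w₀ u` is one of them. The count matches the upper
bound.
-/

open Finset

section VizingBound

variable {V : Type*} [DecidableEq V]

/-- Members `p a ∈ G` chosen for the `a ∈ R` are distinct with `a ∈ p a \ ⋃_{b ≠ a} p b`: the
paper's disjointly representable members, indexed by their representatives. -/
def DisjointlyRepresents (G : Finset (Finset V)) (R : Finset V) : Prop :=
  ∀ a ∈ R, ∃ p ∈ G, p ∩ R = {a}

theorem DisjointlyRepresents.mono {G : Finset (Finset V)} {R R' : Finset V}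
    (h : DisjointlyRepresents G R) (hR : R' ⊆ R) : DisjointlyRepresents G R' := by
  intro a ha
  obtain ⟨p, hp, hpR⟩ := h a (hR ha)
  refine ⟨p, hp, ?_⟩
  rw [← inter_eq_right.2 hR, ← inter_assoc, hpR, singleton_inter_of_mem ha]

theorem DisjointlyRepresents.disjoint_of_forall {G : Finset (Finset V)} {R S : Finset V}
    (h : DisjointlyRepresents G R) (hS : ∀ p ∈ G, Disjoint S p) : Disjoint S R := by
  refine disjoint_right.2 fun a ha => ?_
  obtain ⟨p, hp, hpR⟩ := h a ha
  have hap : a ∈ p ∩ R := hpR ▸ mem_singleton_self a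
  exact disjoint_right.1 (hS p hp) (mem_of_mem_inter_left hap)

theorem disjointlyRepresents_of_forall_pair {G : Finset (Finset V)} {R : Finset V}
    (h : ∀ a ∈ R, ∃ c ∉ R, {c, a} ∈ G) : DisjointlyRepresents G R := by
  intro a ha
  obtain ⟨c, hc, hcG⟩ := h a ha
  exact ⟨{c, a}, hcG, by rw [insert_inter_of_notMem hc, singleton_inter_of_mem ha]⟩

theorem eq_pair_of_card_eq_two {p : Finset V} (hp : #p = 2) {x y : V} (hx : x ∈ p) (hy : y ∈ p)
    (hxy : x ≠ y) : p = {x, y} :=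
  (eq_of_subset_of_card_le (insert_subset hx (singleton_subset_iff.2 hy))
    (by rw [hp, card_pair hxy])).symm

variable {G : Finset (Finset V)}

theorem ne_of_pair_mem (hG : ∀ p ∈ G, #p = 2) {x y : V} (h : {x, y} ∈ G) : x ≠ y := by
  rintro rfl
  simpa using hG _ h

theorem card_filter_pair_mem (hG : ∀ p ∈ G, #p = 2) (x : V) (T : Finset V) :
    #{y ∈ T | {x, y} ∈ G} = #{p ∈ G | x ∈ p ∧ p.erase x ⊆ T} := by
  refine card_nbij (fun y => {x, y}) (fun y hy => ?_) (fun y hy y' _ h => ?_) (fun p hp => ?_)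
  · obtain ⟨hyT, hyG⟩ := mem_filter.1 hy
    exact mem_filter.2 ⟨hyG, mem_insert_self _ _,
      (erase_insert_subset _ _).trans (singleton_subset_iff.2 hyT)⟩
  · have hmem : y ∈ ({x, y'} : Finset V) :=
      (show ({x, y} : Finset V) = {x, y'} from h) ▸ mem_insert_of_mem (mem_singleton_self y)
    have hxy := ne_of_pair_mem hG (mem_filter.1 hy).2
    exact mem_singleton.1 ((mem_insert.1 hmem).resolve_left hxy.symm)
  · obtain ⟨hpG, hxp, hpT⟩ := mem_filter.1 hp
    have hp1 : #(p.erase x) = 1 := by rw [card_erase_of_mem hxp, hG p hpG]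
    obtain ⟨y, hy⟩ := card_eq_one.1 hp1
    have hpxy : p = {x, y} := by rw [← insert_erase hxp, hy]
    exact ⟨y, mem_filter.2 ⟨hpT (hy ▸ mem_singleton_self y), hpxy ▸ hpG⟩, hpxy.symm⟩

theorem two_mul_card_eq_add_sum_card_inter (hG : ∀ p ∈ G, #p = 2) (S : Finset V) :
    2 * #G = 2 * #{p ∈ G | Disjoint S p} + #{p ∈ G | #(S ∩ p) = 1} + ∑ p ∈ G, #(S ∩ p) := by
  rw [card_filter, card_filter, card_eq_sum_ones G, mul_sum, mul_sum, ← sum_add_distrib,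
    ← sum_add_distrib]
  refine sum_congr rfl fun p hp => ?_
  have hle : #(S ∩ p) ≤ 2 := hG p hp ▸ card_le_card inter_subset_right
  by_cases h₀ : Disjoint S p
  · simp [h₀, disjoint_iff_inter_eq_empty.1 h₀]
  · have hne : #(S ∩ p) ≠ 0 := by rwa [Ne, card_eq_zero, ← disjoint_iff_inter_eq_empty]
    rw [if_neg h₀]
    split_ifs <;> omega

variable [Fintype V]

def nbhd (G : Finset (Finset V)) (x : V) : Finset V := {y | {x, y} ∈ G}

theorem self_notMem_nbhd (hG : ∀ p ∈ G, #p = 2) (x : V) : x ∉ nbhd G x :=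
  fun h => ne_of_pair_mem hG (mem_filter.1 h).2 rfl

theorem subset_insert_nbhd (hG : ∀ p ∈ G, #p = 2) {p : Finset V} (hp : p ∈ G) {x : V}
    (hx : x ∈ p) : p ⊆ insert x (nbhd G x) := by
  intro y hy
  rcases eq_or_ne x y with rfl | hxy
  · exact mem_insert_self _ _
  · rw [eq_pair_of_card_eq_two (hG p hp) hx hy hxy] at hp
    exact mem_insert_of_mem (mem_filter.2 ⟨mem_univ _, hp⟩)

theorem disjointlyRepresents_nbhd_union (hG : ∀ p ∈ G, #p = 2) {x : V} {R : Finset V}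
    (hR : DisjointlyRepresents {p ∈ G | Disjoint (insert x (nbhd G x)) p} R) :
    DisjointlyRepresents G (nbhd G x ∪ R) := by
  have hSR : Disjoint (insert x (nbhd G x)) R :=
    hR.disjoint_of_forall fun p hp => (mem_filter.1 hp).2
  intro a ha
  rcases mem_union.1 ha with haN | haR
  · refine ⟨{x, a}, (mem_filter.1 haN).2, ?_⟩
    have hx : x ∉ nbhd G x ∪ R :=
      notMem_union.2 ⟨self_notMem_nbhd hG x, disjoint_left.1 hSR (mem_insert_self _ _)⟩
    rw [insert_inter_of_notMem hx, singleton_inter_of_mem ha]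
  · obtain ⟨p, hp, hpR⟩ := hR a haR
    obtain ⟨hpG, hSp⟩ := mem_filter.1 hp
    refine ⟨p, hpG, ?_⟩
    rw [inter_union_distrib_left, hpR,
      disjoint_iff_inter_eq_empty.1 (hSp.mono_left (subset_insert _ _)).symm, empty_union]

theorem disjointlyRepresents_erase_union (hG : ∀ p ∈ G, #p = 2) {x v : V}
    (hv : v ∈ nbhd G x) :
    DisjointlyRepresents G ((nbhd G x).erase v ∪ {y ∈ (insert x (nbhd G x))ᶜ | {v, y} ∈ G}) := by
  refine disjointlyRepresents_of_forall_pair fun a ha => ?_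
  rcases mem_union.1 ha with haN | haR
  · refine ⟨x, notMem_union.2 ⟨fun h => self_notMem_nbhd hG x (mem_of_mem_erase h), ?_⟩,
      (mem_filter.1 (mem_of_mem_erase haN)).2⟩
    exact fun h => mem_compl.1 (mem_filter.1 h).1 (mem_insert_self _ _)
  · refine ⟨v, notMem_union.2 ⟨notMem_erase v _, ?_⟩, (mem_filter.1 haR).2⟩
    exact fun h => mem_compl.1 (mem_filter.1 h).1 (mem_insert_of_mem hv)

theorem card_filter_card_inter_eq_one_le (hG : ∀ p ∈ G, #p = 2) {f : ℕ}
    (hrep : ∀ R, DisjointlyRepresents G R → #R ≤ f) (x : V) :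
    #{p ∈ G | #(insert x (nbhd G x) ∩ p) = 1} ≤ #(nbhd G x) * (f - #(nbhd G x) + 1) := by
  set N := nbhd G x
  set S := insert x N
  have hsub : {p ∈ G | #(S ∩ p) = 1} ⊆
      N.biUnion fun v => {p ∈ G | v ∈ p ∧ p.erase v ⊆ Sᶜ} := by
    intro p hp
    obtain ⟨hpG, hp1⟩ := mem_filter.1 hp
    obtain ⟨v, hv⟩ := card_eq_one.1 hp1
    obtain ⟨hvS, hvp⟩ := mem_inter.1 (hv ▸ mem_singleton_self v : v ∈ S ∩ p)
    have hvx : v ≠ x := by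
      rintro rfl
      rw [inter_eq_right.2 (subset_insert_nbhd hG hpG hvp), hG p hpG] at hp1
      omega
    refine mem_biUnion.2 ⟨v, (mem_insert.1 hvS).resolve_left hvx,
      mem_filter.2 ⟨hpG, hvp, fun z hz => mem_compl.2 fun hzS => ?_⟩⟩
    have hzv : z ∈ S ∩ p := mem_inter.2 ⟨hzS, mem_of_mem_erase hz⟩
    rw [hv, mem_singleton] at hzv
    exact ne_of_mem_erase hz hzv
  refine (card_le_card hsub).trans (card_biUnion_le.trans ?_)
  refine (sum_le_card_nsmul _ _ _ fun v hv => ?_).trans_eq (smul_eq_mul _ _)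
  have hdisj : Disjoint (N.erase v) {y ∈ Sᶜ | {v, y} ∈ G} := disjoint_left.2 fun a ha hb =>
    mem_compl.1 (mem_filter.1 hb).1 (mem_insert_of_mem (mem_of_mem_erase ha))
  have hrep' := hrep _ (disjointlyRepresents_erase_union hG hv)
  rw [card_union_of_disjoint hdisj, card_erase_of_mem hv] at hrep'
  have hN : 1 ≤ #N := card_pos.2 ⟨v, hv⟩
  rw [← card_filter_pair_mem hG]
  omega

theorem vizing_bound_step {g g₀ g₁ σ Δ d : ℕ} (hΔ : 1 ≤ Δ) (hg : 2 * g = 2 * g₀ + g₁ + σ)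
    (h₀ : 2 * g₀ + d % 2 ≤ d * (d + 2)) (h₁ : g₁ ≤ Δ * (d + 1)) (hσ : σ ≤ (Δ + 1) * Δ) :
    2 * g + (Δ + d) % 2 ≤ (Δ + d) * (Δ + d + 2) := by
  rcases Nat.eq_zero_or_pos d with rfl | hd
  · have hpar : (Δ * (Δ + 2)) % 2 = Δ % 2 := by
      rcases Nat.mod_two_eq_zero_or_one Δ with h | h <;> simp [Nat.mul_mod, h]
    have hsum : (Δ + 1) * Δ + Δ * (0 + 1) = Δ * (Δ + 2) := by ring
    simp only [add_zero, zero_mul, Nat.zero_mod, nonpos_iff_eq_zero] at h₀ ⊢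
    generalize Δ * (Δ + 2) = P at *
    omega
  · have hΔd : 1 ≤ Δ * d := Nat.one_le_iff_ne_zero.2 (by positivity)
    have key : (Δ + d) * (Δ + d + 2) = d * (d + 2) + Δ * (d + 1) + (Δ + 1) * Δ + Δ * d := by
      ring
    have := Nat.mod_lt (Δ + d) two_pos
    omega

/-- Vizing's bound `#G ≤ ⌊f (f + 2) / 2⌋`, i.e. `f(2, f + 1)` of the paper. -/
theorem two_mul_card_add_mod_two_le (hG : ∀ p ∈ G, #p = 2) {f : ℕ}
    (hrep : ∀ R, DisjointlyRepresents G R → #R ≤ f) : 2 * #G + f % 2 ≤ f * (f + 2) := by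
  induction f using Nat.strong_induction_on generalizing G with
  | _ f ih =>
  rcases G.eq_empty_or_nonempty with rfl | ⟨p₀, hp₀⟩
  · simpa using (Nat.mod_le f 2).trans (Nat.le_mul_of_pos_right f (by omega))
  obtain ⟨y₀, hy₀⟩ : p₀.Nonempty := card_pos.1 (by rw [hG p₀ hp₀]; omega)
  have : Nonempty V := ⟨y₀⟩
  obtain ⟨x, hx⟩ := Finite.exists_max fun v => #{p ∈ G | v ∈ p}
  set N := nbhd G x
  set S := insert x N
  have hN : #N = #{p ∈ G | x ∈ p} := by
    unfold N nbhd
    rw [card_filter_pair_mem hG x univ]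
    simp
  have hΔ : 1 ≤ #N := by
    rw [hN]
    exact (card_pos.2 ⟨p₀, mem_filter.2 ⟨hp₀, hy₀⟩⟩ : 0 < #{p ∈ G | y₀ ∈ p}).trans_le (hx y₀)
  have h₀ : ∀ R, DisjointlyRepresents {p ∈ G | Disjoint S p} R → #N + #R ≤ f := fun R hR => by
    have hSR := hR.disjoint_of_forall fun p hp => (mem_filter.1 hp).2
    rw [← card_union_of_disjoint (hSR.mono_left (subset_insert x N))]
    exact hrep _ (disjointlyRepresents_nbhd_union hG hR)
  have hNf : #N ≤ f := by simpa using h₀ ∅ (by simp [DisjointlyRepresents])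
  have hG₀ := ih (f - #N) (by omega) (fun p hp => hG p (mem_filter.1 hp).1)
    fun R hR => by have := h₀ R hR; omega
  have hσ : ∑ p ∈ G, #(S ∩ p) ≤ (#N + 1) * #N := by
    rw [← card_insert_of_notMem (self_notMem_nbhd hG x)]
    exact sum_card_inter_le fun v _ => hN ▸ hx v
  have := vizing_bound_step hΔ (two_mul_card_eq_add_sum_card_inter hG S) hG₀
    (card_filter_card_inter_eq_one_le hG hrep x) hσ
  rwa [Nat.add_sub_cancel' hNf] at this

end VizingBound

section Link

variable {V : Type*} [DecidableEq V] {H : Finset (Finset V)} {t : ℕ}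

def link (H : Finset (Finset V)) (v : V) : Finset (Finset V) :=
  {e ∈ H | v ∈ e}.image (·.erase v)

theorem card_link (H : Finset (Finset V)) (v : V) : #(link H v) = #{e ∈ H | v ∈ e} :=
  card_image_of_injOn fun _ he _ he' h =>
    erase_injOn' v (mem_filter.1 (mem_coe.1 he)).2 (mem_filter.1 (mem_coe.1 he')).2 h

theorem card_eq_two_of_mem_link (h3 : ∀ e ∈ H, #e = 3) {v : V} {p : Finset V}
    (hp : p ∈ link H v) : #p = 2 := by
  obtain ⟨e, he, rfl⟩ := mem_image.1 hp
  obtain ⟨heH, hve⟩ := mem_filter.1 he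
  rw [card_erase_of_mem hve, h3 e heH]

theorem hasStarTrace_of_disjointlyRepresents_link {v : V} {R : Finset V}
    (hR : DisjointlyRepresents (link H v) R) (hRt : #R = t) : HasStarTrace t H := by
  have hchoice : ∀ a : R, ∃ e ∈ H, v ∈ e ∧ e.erase v ∩ R = {(a : V)} := by
    rintro ⟨a, ha⟩
    obtain ⟨p, hp, hpR⟩ := hR a ha
    obtain ⟨e, he, rfl⟩ := mem_image.1 hp
    exact ⟨e, (mem_filter.1 he).1, (mem_filter.1 he).2, hpR⟩
  choose e heH hve heR using hchoice
  have hvR : v ∉ R := fun hv =>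
    notMem_erase v (e ⟨v, hv⟩) (mem_of_mem_inter_left (heR ⟨v, hv⟩ ▸ mem_singleton_self v))
  have heR' : ∀ a, e a ∩ R = {(a : V)} := fun a => by
    rw [← heR a, erase_inter, erase_eq_of_notMem fun h => hvR (mem_of_mem_inter_right h)]
  let σ : Fin t ≃ R := (finCongr hRt.symm).trans R.equivFin.symm
  have himage : image (fun i => (σ i : V)) univ = R := by
    ext a
    simp only [mem_image, mem_univ, true_and]
    exact ⟨fun ⟨i, hi⟩ => hi ▸ (σ i).2, fun ha => ⟨σ.symm ⟨a, ha⟩, by simp⟩⟩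
  refine ⟨v, fun i => σ i, fun i => e (σ i), fun i j h => σ.injective (Subtype.ext h),
    fun i h => hvR (h ▸ (σ i).2), fun i j h => σ.injective (Subtype.ext ?_), fun i => heH _,
    fun i => ?_⟩
  · have hij : e (σ i) ∩ R = e (σ j) ∩ R := congrArg (· ∩ R) h
    rwa [heR', heR', singleton_inj] at hij
  · rw [himage, inter_insert_of_mem (hve _), heR']

theorem card_lt_of_disjointlyRepresents_link (hH : ¬HasStarTrace t H) {v : V} {R : Finset V}
    (hR : DisjointlyRepresents (link H v) R) : #R < t := by
  by_contra! h
  obtain ⟨R', hR'R, hR't⟩ := exists_subset_card_eq h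
  exact hH (hasStarTrace_of_disjointlyRepresents_link (hR.mono hR'R) hR't)

variable [Fintype V]

theorem two_mul_card_filter_mem_add_le (h3 : ∀ e ∈ H, #e = 3) (hH : ¬HasStarTrace t H)
    (ht : t ≠ 0) (v : V) : 2 * #{e ∈ H | v ∈ e} + (t + 1) % 2 + 1 ≤ t ^ 2 := by
  have h := two_mul_card_add_mod_two_le (G := link H v) (f := t - 1)
    (fun p hp => card_eq_two_of_mem_link h3 hp)
    fun R hR => Nat.le_sub_one_of_lt (card_lt_of_disjointlyRepresents_link hH hR)
  rw [card_link] at h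
  obtain ⟨s, rfl⟩ := Nat.exists_eq_add_one_of_ne_zero ht
  have hsq : (s + 1) ^ 2 = s * (s + 2) + 1 := by ring
  simp only [Nat.add_sub_cancel] at h
  omega

theorem six_mul_card_le_of_not_hasStarTrace (h3 : ∀ e ∈ H, #e = 3) (hH : ¬HasStarTrace t H)
    (ht : t ≠ 0) (heven : Even t) : 6 * #H ≤ Fintype.card V * (t ^ 2 - 2) := by
  have hdeg : ∀ v ∈ (univ : Finset V), #{e ∈ H | v ∈ e} ≤ (t ^ 2 - 2) / 2 := fun v _ => by
    have := two_mul_card_filter_mem_add_le h3 hH ht v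
    have : (t + 1) % 2 = 1 := by rcases heven with ⟨r, rfl⟩; omega
    omega
  calc 6 * #H = 2 * ∑ e ∈ H, #(univ ∩ e) := by
        rw [sum_congr rfl fun e he => by rw [univ_inter, h3 e he], sum_const, smul_eq_mul]
        ring
    _ ≤ 2 * (Fintype.card V * ((t ^ 2 - 2) / 2)) := by
        rw [← card_univ]; gcongr; exact sum_card_inter_le hdeg
    _ ≤ Fintype.card V * (t ^ 2 - 2) := by
        rw [mul_left_comm]; gcongr; exact Nat.mul_div_le _ _

end Link

section Construction

variable {X Y : Type*} [DecidableEq X] [DecidableEq Y] {t : ℕ}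

theorem hasStarTrace_of_map (φ : X ↪ Y) (ht : t ≠ 0) {H : Finset (Finset X)}
    (h : HasStarTrace t (H.image (map φ))) : HasStarTrace t H := by
  obtain ⟨w₀, w, f, hw, hw₀, hf, hfH, hfw⟩ := h
  choose g hgH hgf using fun i => mem_image.1 (hfH i)
  have hmem : ∀ i, w₀ ∈ f i ∧ w i ∈ f i := fun i => by
    have hsub : {w₀, w i} ⊆ f i := hfw i ▸ inter_subset_left
    exact ⟨hsub (mem_insert_self _ _), hsub (mem_insert_of_mem (mem_singleton_self _))⟩
  obtain ⟨x₀, -, rfl⟩ := mem_map.1 ((hgf ⟨0, Nat.pos_of_ne_zero ht⟩).symm ▸ (hmem _).1)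
  have hrange : ∀ i, ∃ y, φ y = w i := fun i =>
    (mem_map.1 ((hgf i).symm ▸ (hmem i).2)).imp fun _ h => h.2
  choose v hv using hrange
  obtain rfl : w = fun i => φ (v i) := funext fun i => (hv i).symm
  refine ⟨x₀, v, g, fun i j h => hw (by simp only [h]), fun i h => hw₀ i (by simp only [h]),
    fun i j h => hf (by rw [← hgf i, ← hgf j, h]), hgH, fun i => map_injective φ ?_⟩
  rw [map_inter, hgf, map_insert, map_insert, map_singleton, map_eq_image, image_image,
    ← hfw i]
  rfl

def blowUp (ι : Type*) [Fintype ι] [DecidableEq ι] (H : Finset (Finset X)) :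
    Finset (Finset (ι × X)) :=
  univ.biUnion fun b => H.image (map (Function.Embedding.sectR b X))

variable {ι : Type*} [Fintype ι] [DecidableEq ι] {H : Finset (Finset X)}

theorem card_blowUp (hH : ∀ e ∈ H, e.Nonempty) : #(blowUp ι H) = Fintype.card ι * #H := by
  rw [blowUp, card_biUnion, sum_congr rfl fun b _ => card_image_of_injective _ (map_injective _),
    sum_const, card_univ, smul_eq_mul]
  refine fun b _ b' _ hbb' => disjoint_left.2 fun e he he' => ?_
  obtain ⟨g, hg, rfl⟩ := mem_image.1 he
  obtain ⟨g', -, hg'⟩ := mem_image.1 he'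
  obtain ⟨x, hx⟩ := hH g hg
  have hbx : (b, x) ∈ g'.map (Function.Embedding.sectR b' X) := hg' ▸ mem_map_of_mem _ hx
  obtain ⟨_, _, h⟩ := mem_map.1 hbx
  exact hbb' (congrArg Prod.fst h).symm

theorem card_of_mem_blowUp {k : ℕ} (hH : ∀ e ∈ H, #e = k) {e : Finset (ι × X)}
    (he : e ∈ blowUp ι H) : #e = k := by
  obtain ⟨b, -, hb⟩ := mem_biUnion.1 he
  obtain ⟨g, hg, rfl⟩ := mem_image.1 hb
  rw [card_map, hH g hg]

theorem hasStarTrace_of_blowUp (ht : t ≠ 0) (h : HasStarTrace t (blowUp ι H)) :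
    HasStarTrace t H := by
  obtain ⟨w₀, w, f, hw, hw₀, hf, hfH, hfw⟩ := h
  refine hasStarTrace_of_map (Function.Embedding.sectR w₀.1 X) ht
    ⟨w₀, w, f, hw, hw₀, hf, fun i => ?_, hfw⟩
  obtain ⟨b, -, hb⟩ := mem_biUnion.1 (hfH i)
  obtain ⟨g, -, hg⟩ := mem_image.1 hb
  have hw₀f : w₀ ∈ f i := (hfw i ▸ inter_subset_left : {w₀, w i} ⊆ f i) (mem_insert_self _ _)
  obtain ⟨x, -, rfl⟩ := mem_map.1 (hg ▸ hw₀f)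
  exact hb

def CoversPairsByTriples (C : Finset (Finset X)) : Prop :=
  ∀ x y : X, x ≠ y → ∃ z, z ≠ x ∧ z ≠ y ∧ {x, y, z} ∈ C

theorem not_hasStarTrace_powersetCard_sdiff_s6 [Fintype X] (hX : Fintype.card X = t + 2)
    {C : Finset (Finset X)} (hC : CoversPairsByTriples C) :
    ¬HasStarTrace t (univ.powersetCard 3 \ C) := by
  rintro ⟨w₀, w, f, hw, hw₀, hf, hfH, hfw⟩
  set S := insert w₀ (image w univ)
  have hS : #S = t + 1 := by
    rw [card_insert_of_notMem (by simpa using hw₀), card_image_of_injective _ hw, card_univ,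
      Fintype.card_fin]
  obtain ⟨u, hu⟩ : ∃ u, Sᶜ = {u} := card_eq_one.1 (by rw [card_compl, hS, hX]; omega)
  have hout : ∀ x, x ∉ S → x = u := fun x hx => mem_singleton.1 (hu ▸ mem_compl.2 hx)
  have huS : u ∉ S := mem_compl.1 (hu ▸ mem_singleton_self u)
  have hf_eq : ∀ i, f i = {u, w₀, w i} := by
    intro i
    have hcard := (mem_powersetCard.1 (mem_sdiff.1 (hfH i)).1).2
    refine eq_of_subset_of_card_le (fun x hx => ?_) (hcard ▸ card_le_three)
    by_cases hxS : x ∈ S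
    · exact mem_insert_of_mem (hfw i ▸ mem_inter.2 ⟨hx, hxS⟩)
    · exact hout x hxS ▸ mem_insert_self _ _
  obtain ⟨z, hzw₀, hzu, hzC⟩ := hC w₀ u fun h => huS (h ▸ mem_insert_self _ _)
  obtain ⟨j, -, rfl⟩ : ∃ j ∈ univ, w j = z :=
    mem_image.1 ((mem_insert.1 (by_contra fun h => hzu (hout z h))).resolve_left hzw₀)
  exact (mem_sdiff.1 (hfH j)).2 (by rwa [hf_eq j, insert_comm])

theorem exists_not_hasStarTrace_of_coversPairsByTriples [Fintype X] [Fintype Y] {m : ℕ}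
    (hY : Fintype.card Y = (t + 2) * m) (hX : Fintype.card X = t + 2) (ht : t ≠ 0)
    {C : Finset (Finset X)} (hC : CoversPairsByTriples C) :
    ∃ H : Finset (Finset Y), (∀ e ∈ H, #e = 3) ∧ ¬HasStarTrace t H ∧
      m * ((t + 2).choose 3 - #C) ≤ #H := by
  set H₀ := univ.powersetCard 3 \ C
  have h3 : ∀ e ∈ H₀, #e = 3 := fun e he => (mem_powersetCard.1 (mem_sdiff.1 he).1).2
  let φ : Fin m × X ↪ Y := (Fintype.equivOfCardEq (by simp [hX, hY, mul_comm])).toEmbedding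
  refine ⟨(blowUp (Fin m) H₀).image (map φ), fun e he => ?_, fun h => ?_, ?_⟩
  · obtain ⟨g, hg, rfl⟩ := mem_image.1 he
    rw [card_map, card_of_mem_blowUp h3 hg]
  · exact not_hasStarTrace_powersetCard_sdiff_s6 hX hC
      (hasStarTrace_of_blowUp ht (hasStarTrace_of_map φ ht h))
  · rw [card_image_of_injective _ (map_injective φ),
      card_blowUp fun e he => card_pos.1 (by rw [h3 e he]; omega), Fintype.card_fin]
    gcongr
    calc _ = #(univ.powersetCard 3 : Finset (Finset X)) - #C := by
          rw [card_powersetCard, card_univ, hX]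
      _ ≤ #H₀ := le_card_sdiff _ _

end Construction

section ZModCover

theorem two_mul_natCast_zmod_two_mul (k : ℕ) : 2 * (k : ZMod (2 * k)) = 0 := by
  exact_mod_cast ZMod.natCast_self (2 * k)

variable (k : ℕ) [NeZero k]

/-- Vertices are `(level, x)`. A pair `{(a, p), (a, q)}` is covered by `(a + 1, p + q)`, and a
pair `{(a, p), (a + 1, q)}` by the first family at `{p, q - p}` unless `q = 2 p`, where the second
family covers it. There are `3 C(2k, 2) + 3k = 6k²` triples. -/
def zmodCover : Finset (Finset (ZMod 3 × ZMod (2 * k))) :=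
  (univ ×ˢ univ.powersetCard 2).image
      (fun as : ZMod 3 × Finset (ZMod (2 * k)) =>
        insert (as.1 + 1, ∑ x ∈ as.2, x) (as.2.image (as.1, ·))) ∪
    (univ ×ˢ range k).image fun aj : ZMod 3 × ℕ =>
      {(aj.1, (aj.2 : ZMod (2 * k))), (aj.1, (aj.2 : ZMod (2 * k)) + k),
        (aj.1 + 1, 2 * (aj.2 : ZMod (2 * k)))}

theorem natCast_ne_zero_zmod_two_mul : (k : ZMod (2 * k)) ≠ 0 := by
  rw [Ne, ZMod.natCast_eq_zero_iff]
  have := NeZero.pos k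
  exact fun h => absurd (Nat.le_of_dvd this h) (by omega)

theorem triple_mem_zmodCover (a : ZMod 3) {p q : ZMod (2 * k)} (hpq : p ≠ q) :
    {(a, p), (a, q), (a + 1, p + q)} ∈ zmodCover k := by
  refine mem_union_left _ (mem_image.2 ⟨(a, {p, q}), mem_product.2 ⟨mem_univ _,
    mem_powersetCard.2 ⟨subset_univ _, card_pair hpq⟩⟩, ?_⟩)
  simp only [sum_pair hpq, image_insert, image_singleton]
  ext
  simp only [mem_insert, mem_singleton]
  tauto

theorem double_triple_mem_zmodCover (a : ZMod 3) (p : ZMod (2 * k)) :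
    {(a, p), (a, p + k), (a + 1, 2 * p)} ∈ zmodCover k := by
  have hj : ∃ j < k, (j : ZMod (2 * k)) = p ∨ (j : ZMod (2 * k)) + k = p := by
    have := ZMod.val_lt p
    by_cases hp : p.val < k
    · exact ⟨p.val, hp, Or.inl (ZMod.natCast_zmod_val p)⟩
    · refine ⟨p.val - k, by omega, Or.inr ?_⟩
      rw [← Nat.cast_add, Nat.sub_add_cancel (by omega), ZMod.natCast_zmod_val]
  obtain ⟨j, hjk, hp | hp⟩ := hj
  all_goals refine mem_union_right _ (mem_image.2 ⟨(a, j), mem_product.2 ⟨mem_univ _,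
    mem_range.2 hjk⟩, ?_⟩)
  · rw [← hp]
  · dsimp only
    rw [← hp, add_assoc, ← two_mul (k : ZMod (2 * k)), two_mul_natCast_zmod_two_mul, add_zero,
      mul_add, two_mul_natCast_zmod_two_mul, add_zero]
    exact insert_comm _ _ _

theorem coversPairsByTriples_zmodCover : CoversPairsByTriples (zmodCover k) := by
  have hk := natCast_ne_zero_zmod_two_mul k
  have hadj : ∀ a p q,
      ∃ z, z ≠ (a, p) ∧ z ≠ (a + 1, q) ∧ {(a, p), (a + 1, q), z} ∈ zmodCover k := by
    intro a p q
    by_cases hq : q = 2 * p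
    · refine ⟨(a, p + k), by simpa using hk, by simp, ?_⟩
      rw [pair_comm, hq]
      exact double_triple_mem_zmodCover k a p
    · have hne : p ≠ q - p := fun h => hq (by linear_combination -h)
      refine ⟨(a, q - p), by simpa using hne.symm, by simp, ?_⟩
      rw [pair_comm]
      simpa using triple_mem_zmodCover k a hne
  rintro ⟨a, p⟩ ⟨a', q⟩ hxy
  have levels : ∀ b b' : ZMod 3, b' = b ∨ b' = b + 1 ∨ b = b' + 1 := by decide
  rcases levels a a' with rfl | rfl | rfl
  · exact ⟨(_ + 1, p + q), by simp, by simp, triple_mem_zmodCover k _ fun h => hxy (by rw [h])⟩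
  · exact hadj a p q
  · obtain ⟨z, h₁, h₂, hz⟩ := hadj a' q p
    exact ⟨z, h₂, h₁, by rwa [insert_comm]⟩

theorem card_zmodCover_le : #(zmodCover k) ≤ 6 * k ^ 2 := by
  refine (card_union_le _ _).trans ((add_le_add card_image_le card_image_le).trans ?_)
  simp only [card_product, card_univ, ZMod.card, card_powersetCard, card_range,
    Nat.choose_two_right]
  have := NeZero.pos k
  have hchoose : 2 * k * (2 * k - 1) / 2 = k * (2 * k - 1) := by
    rw [mul_assoc, Nat.mul_div_cancel_left _ two_pos]
  rw [hchoose]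
  have : 2 * k - 1 + 1 = 2 * k := by omega
  nlinarith

end ZModCover

theorem mul_sq_sub_two_le_six_mul_choose_sub (t c : ℕ) (hc : 6 * c ≤ (t + 2) ^ 2) :
    (t + 2) * (t ^ 2 - 2) ≤ 6 * ((t + 2).choose 3 - c) := by
  have h6 : 6 * (t + 2).choose 3 = (t + 2) * (t + 1) * t := by
    rw [show 6 = Nat.factorial 3 from rfl, ← Nat.descFactorial_eq_factorial_mul_choose]
    simp [Nat.descFactorial_succ]
    ring
  rw [mul_tsub 6, h6]
  apply Nat.le_sub_of_add_le
  rcases Nat.lt_or_ge t 2 with ht | ht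
  · interval_cases t <;> omega
  · obtain ⟨s, rfl⟩ : ∃ s, t = s + 2 := ⟨t - 2, by omega⟩
    have : (s + 2) ^ 2 - 2 = s ^ 2 + 4 * s + 2 := by ring_nf; omega
    rw [this]
    nlinarith

theorem stmt_6_general (t n : ℕ) (hmod : (t + 2) % 6 = 0) (hdvd : (t + 2) ∣ n) :
    (∃ H : Finset (Finset (Fin n)), (∀ e ∈ H, e.card = 3) ∧ ¬ HasStarTrace t H ∧
        6 * H.card = n * (t ^ 2 - 2)) ∧
    ∀ H : Finset (Finset (Fin n)), (∀ e ∈ H, e.card = 3) → ¬ HasStarTrace t H →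
      6 * H.card ≤ n * (t ^ 2 - 2) := by
  obtain ⟨m, rfl⟩ := hdvd
  obtain ⟨k, hk⟩ : ∃ k, t + 2 = 6 * k := ⟨(t + 2) / 6, by omega⟩
  have : NeZero k := ⟨by omega⟩
  have upper : ∀ H : Finset (Finset (Fin ((t + 2) * m))), (∀ e ∈ H, #e = 3) →
      ¬HasStarTrace t H → 6 * #H ≤ (t + 2) * m * (t ^ 2 - 2) := fun H h3 hH => by
    simpa using six_mul_card_le_of_not_hasStarTrace h3 hH (by omega) (Nat.even_iff.2 (by omega))
  refine ⟨?_, upper⟩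
  have hX : Fintype.card (ZMod 3 × ZMod (2 * k)) = t + 2 := by simp [ZMod.card]; omega
  obtain ⟨H, h3, hH, hcard⟩ := exists_not_hasStarTrace_of_coversPairsByTriples
    (Fintype.card_fin _) hX (by omega) (coversPairsByTriples_zmodCover k)
  refine ⟨H, h3, hH, (upper H h3 hH).antisymm ?_⟩
  have hC : 6 * #(zmodCover k) ≤ (t + 2) ^ 2 := by
    have := card_zmodCover_le k
    rw [hk]
    nlinarith
  calc (t + 2) * m * (t ^ 2 - 2) = m * ((t + 2) * (t ^ 2 - 2)) := by ring
    _ ≤ m * (6 * ((t + 2).choose 3 - #(zmodCover k))) :=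
        Nat.mul_le_mul_left m (mul_sq_sub_two_le_six_mul_choose_sub t _ hC)
    _ ≤ 6 * #H := by linarith

/-- for `t ≥ 2` with `t+2 ≡ 0 (mod 6)` and `(t+2) ∣ n`,
`ex_3(n, Tr(K_{1,t})) = n(t²−2)/6` (stated via `6·card`). -/
theorem stmt_6 (t n : ℕ) (ht : 2 ≤ t) (hmod : (t + 2) % 6 = 0) (hdvd : (t + 2) ∣ n) :
    (∃ H : Finset (Finset (Fin n)), (∀ e ∈ H, e.card = 3) ∧ ¬ HasStarTrace t H ∧
        6 * H.card = n * (t ^ 2 - 2)) ∧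
    ∀ H : Finset (Finset (Fin n)), (∀ e ∈ H, e.card = 3) → ¬ HasStarTrace t H →
      6 * H.card ≤ n * (t ^ 2 - 2) :=
  stmt_6_general t n hmod hdvd
end

section
/- Let t ≥ 3. Let B be a 3-uniform hypergraph on n vertices with no K_{2,t} trace and all co-degrees at most 3t−3, with average degree d = 3e(B)/n. Then d² n ≤ 3(t−1)²(3t−1)n² + 2f(t)dn, where f(t) = 3t−3 + 3(t−1)²(6t−2); consequently d ≤ √(3(3t−1))·(t−1)·√n + O_t(1) and e(B) ≤ (√(3(3t−1))(t−1)/3)·n^{3/2} + O_t(n). -/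
/-
In a 3-graph `Σ_{x ≠ v} codeg(v, x) = 2 deg(v)`; squaring and splitting off the diagonal,
`4 Σ_v deg(v)² = Σ_{x ≠ v} codeg(v, x)² + Σ_{x ≠ y} Σ_{v ∉ {x, y}} codeg(x, v) codeg(y, v)`.
The diagonal part is at most `6 (3t - 3) e(B)`. For the other part fix `x ≠ y` and let `N_x(v)` be
the set of `w ∉ {x, y, v}` with `xvw ∈ B`, so that `codeg(x, v) ≤ |N_x(v)| + [xyv ∈ B]`. Having no
`K_{2,t}` trace means that no `t` vertices can all have both `N_x(v)` and `N_y(v)` leaving the set.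
Hence fewer than `t` vertices have `|N_x(v)|, |N_y(v)| ≥ t`, and a maximal set `T` of vertices
whose two neighbourhoods leave `T` has fewer than `t` elements; every vertex outside `T` and its
witnesses has a neighbourhood inside `T`. Charging `|N_x(v)| |N_y(v)|` accordingly bounds the sum
over `v` by `36 (t - 1)³ + O(t²)`, and Cauchy–Schwarz `(3 e(B))² ≤ n Σ deg²` turns all this into
a quadratic inequality for the average degree.
-/

/-- The co-degree of a pair of vertices. -/
def codeg {V : Type*} [DecidableEq V] (H : Finset (Finset V)) (x y : V) : ℕ :=
  (H.filter fun e => x ∈ e ∧ y ∈ e).card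

/-- `H` contains `K_{2,t}` as a trace. -/
def HasK2tTrace (t : ℕ) {V : Type*} [DecidableEq V] (H : Finset (Finset V)) : Prop :=
  ∃ (x y : V) (u : Fin t → V) (e f : Fin t → Finset V),
    x ≠ y ∧ Function.Injective u ∧ (∀ i, u i ≠ x ∧ u i ≠ y) ∧
    (∀ i, e i ∈ H) ∧ (∀ i, f i ∈ H) ∧
    Function.Injective e ∧ Function.Injective f ∧ (∀ i j, e i ≠ f j) ∧
    (∀ i, e i ∩ insert x (insert y (Finset.image u Finset.univ)) = {x, u i}) ∧
    (∀ i, f i ∩ insert x (insert y (Finset.image u Finset.univ)) = {y, u i})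

open Finset

namespace Finset

variable {V : Type*} [DecidableEq V]

theorem eq_of_triple_subset {e : Finset V} (he : #e = 3) {a b c : V} (hab : a ≠ b) (hac : a ≠ c)
    (hbc : b ≠ c) (h : ({a, b, c} : Finset V) ⊆ e) : e = {a, b, c} :=
  (eq_of_subset_of_card_le h (by rw [he, card_eq_three.2 ⟨a, b, c, hab, hac, hbc, rfl⟩])).symm

theorem exists_eq_triple {e : Finset V} (he : #e = 3) {a b : V} (ha : a ∈ e) (hb : b ∈ e)
    (hab : a ≠ b) : ∃ c, c ≠ a ∧ c ≠ b ∧ e = {a, b, c} := by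
  obtain ⟨c, hc⟩ : (e \ {a, b}).Nonempty := by
    rw [← card_pos, card_sdiff_of_subset (by simp [insert_subset_iff, ha, hb]), he,
      card_pair hab]
    norm_num
  simp only [mem_sdiff, mem_insert, mem_singleton, not_or] at hc
  exact ⟨c, hc.2.1, hc.2.2, eq_of_triple_subset he hab (Ne.symm hc.2.1) (Ne.symm hc.2.2)
    (by simp [insert_subset_iff, ha, hb, hc.1])⟩

theorem triple_inter_eq {S : Finset V} {x u a : V} (hx : x ∈ S) (hu : u ∈ S) (ha : a ∉ S) :
    ({x, u, a} : Finset V) ∩ S = {x, u} := by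
  ext w
  simp only [mem_inter, mem_insert, mem_singleton]
  grind

theorem exists_injective_image_univ_eq {t : ℕ} {T : Finset V} (hT : #T = t) :
    ∃ u : Fin t → V, Function.Injective u ∧ univ.image u = T := by
  let σ : T ≃ Fin t := Fintype.equivFinOfCardEq (by simpa using hT)
  refine ⟨fun i => σ.symm i, Subtype.val_injective.comp σ.symm.injective, ?_⟩
  ext w
  simp only [mem_image, mem_univ, true_and]
  exact ⟨fun ⟨i, hi⟩ => hi ▸ (σ.symm i).2, fun hw => ⟨σ ⟨w, hw⟩, by simp⟩⟩

theorem sum_sum_erase_comm [Fintype V] {M : Type*} [AddCommMonoid M] (F : V → V → V → M) :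
    ∑ v, ∑ x ∈ univ.erase v, ∑ y ∈ (univ.erase v).erase x, F v x y =
      ∑ x, ∑ y ∈ univ.erase x, ∑ v ∈ ({x, y} : Finset V)ᶜ, F v x y := by
  rw [sum_comm' (t' := univ) (s' := fun x => univ.erase x) (by simp [ne_comm])]
  refine sum_congr rfl fun x _ => sum_comm' fun v y => ?_
  simp only [mem_erase, mem_univ, mem_compl, mem_insert, mem_singleton]
  tauto

end Finset

theorem sq_mul_le_of_thirty_six_mul_sq_le {t b n : ℝ} (ht : 2 ≤ t) (hn : 0 < n) (hb : 0 ≤ b)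
    (h : 36 * b ^ 2 ≤
      n * (n ^ 2 * (36 * (t - 1) ^ 3 + 3 * (t - 1) * (6 * (t - 1) + 1)) + 18 * (t - 1) * b)) :
    (3 * b / n) ^ 2 * n ≤ 3 * (t - 1) ^ 2 * (3 * t - 1) * n ^ 2 +
      2 * ((3 * t - 3) + 3 * (t - 1) ^ 2 * (6 * t - 2)) * (3 * b / n) * n := by
  have hlhs : (3 * b / n) ^ 2 * n = 9 * b ^ 2 / n := by field_simp; ring
  have hrhs : 2 * ((3 * t - 3) + 3 * (t - 1) ^ 2 * (6 * t - 2)) * (3 * b / n) * n =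
      6 * ((3 * t - 3) + 3 * (t - 1) ^ 2 * (6 * t - 2)) * b := by field_simp; ring
  rw [hlhs, hrhs, div_le_iff₀ hn]
  have hQ : 36 * (t - 1) ^ 3 + 3 * (t - 1) * (6 * (t - 1) + 1) ≤
      12 * (t - 1) ^ 2 * (3 * t - 1) := by nlinarith
  have hF : 18 * (t - 1) ≤ 24 * ((3 * t - 3) + 3 * (t - 1) ^ 2 * (6 * t - 2)) := by nlinarith
  nlinarith [mul_le_mul_of_nonneg_left hQ (pow_nonneg hn.le 3),
    mul_le_mul_of_nonneg_right hF (mul_nonneg hb hn.le)]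

theorem le_mul_sqrt_add_of_sq_mul_le {c F d n : ℝ} (hc : 0 ≤ c) (hF : 0 ≤ F) (hn : 0 < n)
    (h : d ^ 2 * n ≤ c ^ 2 * n ^ 2 + 2 * F * d * n) : d ≤ c * √n + 2 * F := by
  have hd : d ^ 2 ≤ (c * √n) ^ 2 + 2 * F * d := by
    rw [mul_pow, Real.sq_sqrt hn.le]
    nlinarith
  nlinarith [mul_nonneg hc (Real.sqrt_nonneg n)]

theorem le_rpow_three_halves_add_of_div_le {b c F n : ℝ} (hF : 0 ≤ F) (hn : 0 < n)
    (h : 3 * b / n ≤ c * √n + 2 * F) : b ≤ c / 3 * n ^ ((3 : ℝ) / 2) + 2 * F * n := by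
  have h32 : n ^ ((3 : ℝ) / 2) = n * √n := by
    rw [Real.sqrt_eq_rpow, ← Real.rpow_one_add' hn.le (by norm_num)]
    norm_num
  rw [div_le_iff₀ hn] at h
  rw [h32]
  nlinarith [mul_nonneg hF hn.le]

namespace TripleSystem

variable {V : Type*} [DecidableEq V] {B : Finset (Finset V)}

def degree (B : Finset (Finset V)) (v : V) : ℕ := #{e ∈ B | v ∈ e}

theorem codeg_comm (x y : V) : codeg B x y = codeg B y x := by
  simp only [codeg, and_comm]

variable [Fintype V]

theorem sum_degree (hB3 : ∀ e ∈ B, #e = 3) : ∑ v, degree B v = 3 * #B := by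
  simp_rw [degree, card_filter]
  rw [sum_comm]
  simp [sum_congr rfl hB3, mul_comm]

theorem sum_codeg_erase (hB3 : ∀ e ∈ B, #e = 3) (v : V) :
    ∑ x ∈ univ.erase v, codeg B v x = 2 * degree B v := by
  simp_rw [codeg, degree, card_filter]
  rw [sum_comm, mul_sum]
  refine sum_congr rfl fun e he => ?_
  by_cases hv : v ∈ e
  · simp [hv, erase_inter, card_erase_of_mem hv, hB3 e he]
  · simp [hv]

theorem four_mul_sum_degree_sq_le (hB3 : ∀ e ∈ B, #e = 3) {c Q : ℕ}
    (hc : ∀ a b, a ≠ b → codeg B a b ≤ c)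
    (hQ : ∀ x y, x ≠ y → ∑ v ∈ ({x, y} : Finset V)ᶜ, codeg B x v * codeg B y v ≤ Q) :
    4 * ∑ v, degree B v ^ 2 ≤ Fintype.card V ^ 2 * Q + 6 * c * #B := by
  have hsq : ∀ v, 4 * degree B v ^ 2 = ∑ x ∈ univ.erase v, codeg B v x ^ 2 +
      ∑ x ∈ univ.erase v, ∑ y ∈ (univ.erase v).erase x, codeg B v x * codeg B v y := by
    intro v
    rw [show 4 * degree B v ^ 2 = (2 * degree B v) ^ 2 by ring, ← sum_codeg_erase hB3, sq,
      sum_mul_sum, ← sum_add_distrib]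
    exact sum_congr rfl fun x hx => by rw [← add_sum_erase _ _ hx, sq]
  have hdiag : ∑ v, ∑ x ∈ univ.erase v, codeg B v x ^ 2 ≤ 6 * c * #B :=
    calc _ ≤ ∑ v, ∑ x ∈ univ.erase v, c * codeg B v x := by
          gcongr with v _ x hx
          rw [sq]
          exact Nat.mul_le_mul_right _ (hc v x (ne_of_mem_erase hx).symm)
      _ = 6 * c * #B := by
          simp_rw [← mul_sum, sum_codeg_erase hB3, ← mul_sum, sum_degree hB3]
          ring
  have hoff : ∑ v, ∑ x ∈ univ.erase v, ∑ y ∈ (univ.erase v).erase x,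
      codeg B v x * codeg B v y ≤ Fintype.card V ^ 2 * Q :=
    calc _ = ∑ x, ∑ y ∈ univ.erase x, ∑ v ∈ ({x, y} : Finset V)ᶜ, codeg B x v * codeg B y v := by
          rw [sum_sum_erase_comm]
          exact sum_congr rfl fun x _ => sum_congr rfl fun y _ => sum_congr rfl fun v _ => by
            rw [codeg_comm v x, codeg_comm v y]
      _ ≤ ∑ _x : V, ∑ _y : V, Q := by
          gcongr with x _
          exact (sum_le_sum fun y hy => hQ x y (ne_of_mem_erase hy).symm).trans
            (sum_le_sum_of_subset (erase_subset x univ))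
      _ = Fintype.card V ^ 2 * Q := by simp [sq, mul_assoc]
  rw [mul_sum]
  simp_rw [hsq, sum_add_distrib]
  omega

theorem card_filter_triple_mem_le (a b : V) :
    #{w | w ≠ a ∧ w ≠ b ∧ ({a, b, w} : Finset V) ∈ B} ≤ codeg B a b := by
  refine card_le_card_of_injOn (fun w => {a, b, w}) (fun w hw => ?_) fun w hw w' hw' h => ?_
  · simp only [coe_filter, mem_univ, true_and, Set.mem_ofPred_eq] at hw
    simp [hw.2.2]
  · simp only [coe_filter, mem_univ, true_and, Set.mem_ofPred_eq] at hw hw'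
    have h' : ({a, b, w} : Finset V) = {a, b, w'} := h
    have : w ∈ ({a, b, w'} : Finset V) := h' ▸ by simp
    simpa [hw.1, hw.2.1] using this

/-- The set `N_x(v)` of the proof sketch, for the pair `x ≠ y`. -/
def nbhdVia (B : Finset (Finset V)) (x y v : V) : Finset V :=
  {w | ({x, v, w} : Finset V) ∈ B ∧ w ≠ x ∧ w ≠ y ∧ w ≠ v}

@[simp]
theorem mem_nbhdVia {x y v w : V} :
    w ∈ nbhdVia B x y v ↔ ({x, v, w} : Finset V) ∈ B ∧ w ≠ x ∧ w ≠ y ∧ w ≠ v := by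
  simp [nbhdVia]

theorem card_nbhdVia_le_codeg (x y v : V) : #(nbhdVia B x y v) ≤ codeg B x v :=
  (card_le_card fun w hw => by simp_all).trans (card_filter_triple_mem_le x v)

theorem codeg_le_card_nbhdVia_add (hB3 : ∀ e ∈ B, #e = 3) {x y v : V} (hxy : x ≠ y)
    (hxv : x ≠ v) (hyv : y ≠ v) :
    codeg B x v ≤ #(nbhdVia B x y v) + if ({x, y, v} : Finset V) ∈ B then 1 else 0 := by
  rw [codeg, ← card_filter_add_card_filter_not (fun e => y ∉ e)]
  gcongr
  · calc _ ≤ #((nbhdVia B x y v).image fun w => {x, v, w}) := card_le_card fun e he => ?_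
      _ ≤ _ := card_image_le
    simp only [mem_filter] at he
    obtain ⟨⟨heB, hxe, hve⟩, hye⟩ := he
    obtain ⟨w, hwx, hwv, rfl⟩ := exists_eq_triple (hB3 e heB) hxe hve hxv
    exact mem_image.2 ⟨w, by grind [mem_nbhdVia], rfl⟩
  · calc _ ≤ #(B.filter (· = {x, y, v})) := card_le_card fun e he => ?_
      _ = _ := by rw [filter_eq']; split_ifs <;> simp
    simp only [mem_filter, not_not] at he ⊢
    exact ⟨he.1.1, eq_of_triple_subset (hB3 e he.1.1) hxy hxv hyv
      (by simp [insert_subset_iff, he.1.2.1, he.1.2.2, he.2])⟩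

theorem hasK2tTrace_of_not_subset {t : ℕ} {x y : V} (hxy : x ≠ y) {T : Finset V}
    (hT : #T = t) (hxT : x ∉ T) (hyT : y ∉ T)
    (hescape : ∀ v ∈ T, ¬ nbhdVia B x y v ⊆ T ∧ ¬ nbhdVia B y x v ⊆ T) : HasK2tTrace t B := by
  obtain ⟨u, hu_inj, rfl⟩ := exists_injective_image_univ_eq hT
  have huT : ∀ i, u i ∈ univ.image u := fun i => mem_image_of_mem u (mem_univ i)
  have hux : ∀ i, u i ≠ x := fun i h => hxT (h ▸ huT i)
  have huy : ∀ i, u i ≠ y := fun i h => hyT (h ▸ huT i)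
  choose a ha using fun i => sdiff_nonempty.2 (hescape _ (huT i)).1
  choose b hb using fun i => sdiff_nonempty.2 (hescape _ (huT i)).2
  simp only [mem_sdiff, mem_nbhdVia] at ha hb
  set S := insert x (insert y (univ.image u))
  have he : ∀ i, ({x, u i, a i} : Finset V) ∩ S = {x, u i} := fun i =>
    triple_inter_eq (by simp [S]) (by simp [S, huT])
      (by simp [S, (ha i).1.2.1, (ha i).1.2.2.1, (ha i).2])
  have hf : ∀ i, ({y, u i, b i} : Finset V) ∩ S = {y, u i} := fun i =>
    triple_inter_eq (by simp [S]) (by simp [S, huT])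
      (by simp [S, (hb i).1.2.1, (hb i).1.2.2.1, (hb i).2])
  have hpair : ∀ {z : V}, (∀ i, u i ≠ z) → ∀ i j, ({z, u i} : Finset V) = {z, u j} → i = j := by
    intro z hz i j h
    have : u i ∈ ({z, u j} : Finset V) := h ▸ by simp
    simp only [mem_insert, mem_singleton, hz i, false_or] at this
    exact hu_inj this
  refine ⟨x, y, u, fun i => {x, u i, a i}, fun i => {y, u i, b i}, hxy, hu_inj,
    fun i => ⟨hux i, huy i⟩, fun i => (ha i).1.1, fun i => (hb i).1.1,
    fun i j h => hpair hux i j (by simpa only [he] using congrArg (· ∩ S) h),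
    fun i j h => hpair huy i j (by simpa only [hf] using congrArg (· ∩ S) h),
    fun i j h => ?_, he, hf⟩
  have hxy' : ({x, u i} : Finset V) = {y, u j} := by
    simpa only [he, hf] using congrArg (· ∩ S) h
  have : x ∈ ({y, u j} : Finset V) := hxy' ▸ by simp
  simp only [mem_insert, mem_singleton] at this
  exact this.elim hxy (hux j).symm

theorem not_subset_of_card_le {x y v : V} {T : Finset V} (hv : v ∈ T)
    (hT : #T ≤ #(nbhdVia B x y v)) : ¬ nbhdVia B x y v ⊆ T := fun h =>
  (card_lt_card ((ssubset_iff_of_subset h).2 ⟨v, hv, by simp⟩)).not_ge hT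

variable {k : ℕ} {x y : V}

theorem card_filter_lt_card_nbhdVia_le (hxy : x ≠ y) (hB : ¬ HasK2tTrace (k + 1) B) :
    #{v ∈ ({x, y} : Finset V)ᶜ | k < #(nbhdVia B x y v) ∧ k < #(nbhdVia B y x v)} ≤ k := by
  by_contra! h
  obtain ⟨T, hTsub, hT⟩ := exists_subset_card_eq h
  have hmem : ∀ v ∈ T, (v ≠ x ∧ v ≠ y) ∧ k < #(nbhdVia B x y v) ∧ k < #(nbhdVia B y x v) :=
    fun v hv => by simpa using hTsub hv
  exact hB <| hasK2tTrace_of_not_subset hxy hT (fun h => (hmem x h).1.1 rfl)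
    (fun h => (hmem y h).1.2 rfl) fun v hv =>
      ⟨not_subset_of_card_le hv (by grind), not_subset_of_card_le hv (by grind)⟩

theorem exists_nbhdVia_subset (hxy : x ≠ y) (hB : ¬ HasK2tTrace (k + 1) B) :
    ∃ T E : Finset V, x ∉ T ∧ y ∉ T ∧ #T ≤ k ∧ #E ≤ 3 * k ∧ ∀ v, v ≠ x → v ≠ y → v ∉ E →
      nbhdVia B x y v ⊆ T ∨ nbhdVia B y x v ⊆ T := by
  let Good : Finset V → Prop := fun T =>
    x ∉ T ∧ y ∉ T ∧ ∀ v ∈ T, ¬ nbhdVia B x y v ⊆ T ∧ ¬ nbhdVia B y x v ⊆ T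
  obtain ⟨T, hT, hmax⟩ := exists_max_image {T | Good T} card ⟨∅, by simp [Good]⟩
  simp only [mem_filter, mem_univ, true_and] at hT hmax
  obtain ⟨hxT, hyT, hesc⟩ := hT
  have hTk : #T ≤ k := by
    by_contra! h
    obtain ⟨T', hT'T, hT'⟩ := exists_subset_card_eq (show k + 1 ≤ #T by omega)
    exact hB <| hasK2tTrace_of_not_subset hxy hT' (fun h => hxT (hT'T h))
      (fun h => hyT (hT'T h)) fun v hv =>
        ⟨fun hs => (hesc v (hT'T hv)).1 (hs.trans hT'T),
          fun hs => (hesc v (hT'T hv)).2 (hs.trans hT'T)⟩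
  choose! σ hσ using fun v hv => sdiff_nonempty.2 (hesc v hv).1
  choose! τ hτ using fun v hv => sdiff_nonempty.2 (hesc v hv).2
  refine ⟨T, T ∪ T.image σ ∪ T.image τ, hxT, hyT, hTk, ?_, fun v hvx hvy hvE => ?_⟩
  · grw [card_union_le, card_union_le, card_image_le, card_image_le]
    omega
  by_contra! hv
  have hvT : v ∉ T := by grind
  have hgood : Good (insert v T) := by
    refine ⟨by grind, by grind, fun w hw => ?_⟩
    rcases mem_insert.1 hw with rfl | hwT
    · simp only [subset_insert_iff_of_notMem (by simp : w ∉ nbhdVia B x y w),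
        subset_insert_iff_of_notMem (by simp : w ∉ nbhdVia B y x w)]
      exact hv
    · have := hσ w hwT
      have := hτ w hwT
      simp only [mem_sdiff] at *
      refine ⟨fun h => ?_, fun h => ?_⟩ <;> grind
  have := hmax _ hgood
  rw [card_insert_of_notMem hvT] at this
  omega

theorem sum_card_nbhdVia_inter_le {s : Finset V} (hs : x ∉ s) (T : Finset V) :
    ∑ v ∈ s, #(nbhdVia B x y v ∩ T) ≤ ∑ w ∈ T, codeg B x w := by
  calc ∑ v ∈ s, #(nbhdVia B x y v ∩ T)
      = ∑ w ∈ T, #{v ∈ s | w ∈ nbhdVia B x y v} := by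
        simp_rw [inter_comm _ T, ← filter_mem_eq_inter, card_filter]
        exact sum_comm
    _ ≤ ∑ w ∈ T, codeg B x w := by
        gcongr with w
        refine (card_le_card fun v hv => ?_).trans (card_filter_triple_mem_le x w)
        simp only [mem_filter, mem_nbhdVia, mem_univ, true_and] at hv ⊢
        rw [pair_comm] at hv
        exact ⟨fun h => hs (h ▸ hv.1), Ne.symm hv.2.2.2.2, hv.2.1⟩

theorem card_nbhdVia_mul_card_nbhdVia_le (hcodeg : ∀ a b, a ≠ b → codeg B a b ≤ 3 * k)
    {T E : Finset V} {v : V} (hvx : v ≠ x) (hvy : v ≠ y)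
    (hstuck : v ∉ E → nbhdVia B x y v ⊆ T ∨ nbhdVia B y x v ⊆ T) :
    #(nbhdVia B x y v) * #(nbhdVia B y x v) ≤
      ((if k < #(nbhdVia B x y v) ∧ k < #(nbhdVia B y x v) then 9 * k ^ 2 else 0) +
        (if v ∈ E then 3 * k ^ 2 else 0)) +
      (3 * k * #(nbhdVia B x y v ∩ T) + 3 * k * #(nbhdVia B y x v ∩ T)) := by
  have hα := (card_nbhdVia_le_codeg x y v).trans (hcodeg _ _ (Ne.symm hvx))
  have hβ := (card_nbhdVia_le_codeg y x v).trans (hcodeg _ _ (Ne.symm hvy))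
  by_cases hbig : k < #(nbhdVia B x y v) ∧ k < #(nbhdVia B y x v)
  · have : #(nbhdVia B x y v) * #(nbhdVia B y x v) ≤ 9 * k ^ 2 := by
      nlinarith [Nat.mul_le_mul hα hβ]
    rw [if_pos hbig]
    omega
  by_cases hvE : v ∈ E
  · have : #(nbhdVia B x y v) * #(nbhdVia B y x v) ≤ 3 * k ^ 2 := by
      rcases not_and_or.1 hbig with h | h
      · nlinarith [Nat.mul_le_mul (not_lt.1 h) hβ]
      · nlinarith [Nat.mul_le_mul hα (not_lt.1 h)]
    rw [if_pos hvE]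
    omega
  rcases hstuck hvE with h | h
  · have : #(nbhdVia B x y v) * #(nbhdVia B y x v) ≤ 3 * k * #(nbhdVia B x y v ∩ T) := by
      rw [inter_eq_left.2 h, mul_comm (3 * k)]
      exact Nat.mul_le_mul_left _ hβ
    omega
  · have : #(nbhdVia B x y v) * #(nbhdVia B y x v) ≤ 3 * k * #(nbhdVia B y x v ∩ T) := by
      rw [inter_eq_left.2 h]
      exact Nat.mul_le_mul_right _ hα
    omega

theorem sum_card_nbhdVia_mul_le (hB : ¬ HasK2tTrace (k + 1) B)
    (hcodeg : ∀ a b, a ≠ b → codeg B a b ≤ 3 * k) (hxy : x ≠ y) :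
    ∑ v ∈ ({x, y} : Finset V)ᶜ, #(nbhdVia B x y v) * #(nbhdVia B y x v) ≤ 36 * k ^ 3 := by
  obtain ⟨T, E, hxT, hyT, hT, hE, hstuck⟩ := exists_nbhdVia_subset hxy hB
  have hinter : ∀ {a b}, a ∉ T → a ∉ ({x, y} : Finset V)ᶜ →
      ∑ v ∈ ({x, y} : Finset V)ᶜ, #(nbhdVia B a b v ∩ T) ≤ k * (3 * k) := by
    intro a b haT ha
    calc _ ≤ ∑ w ∈ T, codeg B a w := sum_card_nbhdVia_inter_le ha T
      _ ≤ ∑ _w ∈ T, 3 * k := sum_le_sum fun w hw => hcodeg a w fun h => haT (h ▸ hw)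
      _ ≤ k * (3 * k) := by rw [sum_const, smul_eq_mul]; exact Nat.mul_le_mul_right _ hT
  calc _ ≤ _ := sum_le_sum fun v hv => card_nbhdVia_mul_card_nbhdVia_le hcodeg
        (by simp_all) (by simp_all) (hstuck v (by simp_all) (by simp_all))
    _ = (#{v ∈ ({x, y} : Finset V)ᶜ | k < #(nbhdVia B x y v) ∧ k < #(nbhdVia B y x v)} *
            (9 * k ^ 2) + #{v ∈ ({x, y} : Finset V)ᶜ | v ∈ E} * (3 * k ^ 2)) +
        (3 * k * ∑ v ∈ ({x, y} : Finset V)ᶜ, #(nbhdVia B x y v ∩ T) +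
          3 * k * ∑ v ∈ ({x, y} : Finset V)ᶜ, #(nbhdVia B y x v ∩ T)) := by
      simp only [sum_add_distrib, mul_sum, ← sum_filter, sum_const, smul_eq_mul]
    _ ≤ (k * (9 * k ^ 2) + 3 * k * (3 * k ^ 2)) +
        (3 * k * (k * (3 * k)) + 3 * k * (k * (3 * k))) := by
      gcongr
      · exact card_filter_lt_card_nbhdVia_le hxy hB
      · exact (card_le_card fun v hv => (mem_filter.1 hv).2).trans hE
      · exact hinter hxT (by simp)
      · exact hinter hyT (by simp)
    _ = 36 * k ^ 3 := by ring

theorem sum_codeg_mul_codeg_le (hB3 : ∀ e ∈ B, #e = 3) (hB : ¬ HasK2tTrace (k + 1) B)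
    (hcodeg : ∀ a b, a ≠ b → codeg B a b ≤ 3 * k) (hxy : x ≠ y) :
    ∑ v ∈ ({x, y} : Finset V)ᶜ, codeg B x v * codeg B y v ≤ 36 * k ^ 3 + 3 * k * (6 * k + 1) := by
  have hpoint : ∀ v ∈ ({x, y} : Finset V)ᶜ, codeg B x v * codeg B y v ≤
      #(nbhdVia B x y v) * #(nbhdVia B y x v) +
        (6 * k + 1) * if ({x, y, v} : Finset V) ∈ B then 1 else 0 := by
    intro v hv
    simp only [mem_compl, mem_insert, mem_singleton, not_or] at hv
    have hx := codeg_le_card_nbhdVia_add hB3 hxy (Ne.symm hv.1) (Ne.symm hv.2)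
    have hy := codeg_le_card_nbhdVia_add hB3 hxy.symm (Ne.symm hv.2) (Ne.symm hv.1)
    rw [insert_comm] at hy
    have hα := (card_nbhdVia_le_codeg x y v).trans (hcodeg _ _ (Ne.symm hv.1))
    have hβ := (card_nbhdVia_le_codeg y x v).trans (hcodeg _ _ (Ne.symm hv.2))
    split_ifs at hx hy ⊢ <;> nlinarith [Nat.mul_le_mul hx hy]
  have hxyv : ∑ v ∈ ({x, y} : Finset V)ᶜ, (if ({x, y, v} : Finset V) ∈ B then 1 else 0) ≤ 3 * k :=
    calc _ = #{v ∈ ({x, y} : Finset V)ᶜ | ({x, y, v} : Finset V) ∈ B} := by rw [card_filter]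
      _ ≤ #{v | v ≠ x ∧ v ≠ y ∧ ({x, y, v} : Finset V) ∈ B} :=
        card_le_card fun v hv => by simp_all
      _ ≤ 3 * k := (card_filter_triple_mem_le x y).trans (hcodeg x y hxy)
  calc _ ≤ _ := sum_le_sum hpoint
    _ = ∑ v ∈ ({x, y} : Finset V)ᶜ, #(nbhdVia B x y v) * #(nbhdVia B y x v) +
        (6 * k + 1) * ∑ v ∈ ({x, y} : Finset V)ᶜ,
          (if ({x, y, v} : Finset V) ∈ B then 1 else 0) := by
      rw [sum_add_distrib, mul_sum]
    _ ≤ 36 * k ^ 3 + (6 * k + 1) * (3 * k) := by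
      gcongr
      · exact sum_card_nbhdVia_mul_le hB hcodeg hxy
    _ = 36 * k ^ 3 + 3 * k * (6 * k + 1) := by ring

theorem thirty_six_mul_card_sq_le (hB3 : ∀ e ∈ B, #e = 3) (hB : ¬ HasK2tTrace (k + 1) B)
    (hcodeg : ∀ a b, a ≠ b → codeg B a b ≤ 3 * k) :
    36 * #B ^ 2 ≤ Fintype.card V *
      (Fintype.card V ^ 2 * (36 * k ^ 3 + 3 * k * (6 * k + 1)) + 18 * k * #B) := by
  have hCS : (∑ v, degree B v) ^ 2 ≤ Fintype.card V * ∑ v, degree B v ^ 2 := by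
    simpa using sq_sum_le_card_mul_sum_sq (s := univ) (f := degree B)
  rw [sum_degree hB3] at hCS
  have h4 := four_mul_sum_degree_sq_le hB3 hcodeg fun x y hxy =>
    sum_codeg_mul_codeg_le hB3 hB hcodeg hxy
  nlinarith

theorem avg_degree_sq_mul_le {t : ℕ} (ht : 2 ≤ t) (hV : 0 < Fintype.card V)
    (hB3 : ∀ e ∈ B, #e = 3) (hB : ¬ HasK2tTrace t B)
    (hcodeg : ∀ x y, x ≠ y → codeg B x y ≤ 3 * t - 3) :
    (3 * (#B : ℝ) / Fintype.card V) ^ 2 * Fintype.card V ≤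
      3 * ((t : ℝ) - 1) ^ 2 * (3 * (t : ℝ) - 1) * (Fintype.card V : ℝ) ^ 2
        + 2 * ((3 * (t : ℝ) - 3) + 3 * ((t : ℝ) - 1) ^ 2 * (6 * (t : ℝ) - 2))
          * (3 * (#B : ℝ) / Fintype.card V) * Fintype.card V := by
  obtain ⟨k, rfl⟩ : ∃ k, t = k + 1 := ⟨t - 1, by omega⟩
  have h := thirty_six_mul_card_sq_le hB3 hB fun x y hxy => (hcodeg x y hxy).trans (by omega)
  refine sq_mul_le_of_thirty_six_mul_sq_le (by exact_mod_cast ht) (by exact_mod_cast hV)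
    (by positivity) ?_
  push_cast
  simp only [add_sub_cancel_right]
  exact_mod_cast h

end TripleSystem

/-- with `d = 3e(B)/n` and `f(t) = 3t−3 + 3(t−1)²(6t−2)`,
`d²n ≤ 3(t−1)²(3t−1)n² + 2f(t)dn`; consequently
`d ≤ √(3(3t−1))(t−1)√n + O_t(1)` and `e(B) ≤ (√(3(3t−1))(t−1)/3)n^{3/2} + O_t(n)`. -/
theorem stmt_16 (t : ℕ) (ht : 3 ≤ t) :
    (∀ n : ℕ, 0 < n → ∀ B : Finset (Finset (Fin n)), (∀ e ∈ B, e.card = 3) →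
      ¬ HasK2tTrace t B → (∀ x y : Fin n, x ≠ y → codeg B x y ≤ 3 * t - 3) →
      (3 * (B.card : ℝ) / n) ^ 2 * n ≤
        3 * ((t : ℝ) - 1) ^ 2 * (3 * (t : ℝ) - 1) * (n : ℝ) ^ 2
          + 2 * ((3 * (t : ℝ) - 3) + 3 * ((t : ℝ) - 1) ^ 2 * (6 * (t : ℝ) - 2))
            * (3 * (B.card : ℝ) / n) * n) ∧
    ∃ C : ℝ, ∀ n : ℕ, 0 < n → ∀ B : Finset (Finset (Fin n)), (∀ e ∈ B, e.card = 3) →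
      ¬ HasK2tTrace t B → (∀ x y : Fin n, x ≠ y → codeg B x y ≤ 3 * t - 3) →
      3 * (B.card : ℝ) / n
          ≤ Real.sqrt (3 * (3 * (t : ℝ) - 1)) * ((t : ℝ) - 1) * Real.sqrt n + C ∧
      (B.card : ℝ)
          ≤ Real.sqrt (3 * (3 * (t : ℝ) - 1)) * ((t : ℝ) - 1) / 3 * (n : ℝ) ^ ((3 : ℝ) / 2)
            + C * n := by
  have ht3 : (3 : ℝ) ≤ t := by exact_mod_cast ht
  set F : ℝ := (3 * (t : ℝ) - 3) + 3 * ((t : ℝ) - 1) ^ 2 * (6 * (t : ℝ) - 2)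
  have hF : 0 ≤ F := by
    nlinarith [mul_nonneg (sq_nonneg ((t : ℝ) - 1)) (by linarith : (0 : ℝ) ≤ 6 * t - 2)]
  refine ⟨fun n hn B hB3 hB hcodeg => ?_, 2 * F, fun n hn B hB3 hB hcodeg => ?_⟩
  · simpa using TripleSystem.avg_degree_sq_mul_le (by omega) (by simpa using hn) hB3 hB hcodeg
  have hmain := TripleSystem.avg_degree_sq_mul_le (by omega) (by simpa using hn) hB3 hB hcodeg
  simp only [Fintype.card_fin] at hmain
  have hd := le_mul_sqrt_add_of_sq_mul_le (c := √(3 * (3 * (t : ℝ) - 1)) * ((t : ℝ) - 1))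
    (d := 3 * (B.card : ℝ) / n) (n := n) (mul_nonneg (Real.sqrt_nonneg _) (by linarith)) hF
    (by exact_mod_cast hn)
    (by rw [mul_pow, Real.sq_sqrt (by linarith)]; linarith)
  exact ⟨hd, le_rpow_three_halves_add_of_div_le hF (by exact_mod_cast hn) hd⟩
end

section
/- Let H be a 3-uniform hypergraph with no K_{2,t} trace (t ≥ 3) and let A be the set of edges of H containing a pair of co-degree exactly 1. Then |A| ≤ ex(n, K_{2,t}), the graph Turán number of K_{2,t}, which is at most (√(t−1)/2)n^{3/2} + o(n^{3/2}). -/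
/-- A simple graph is `K_{2,t}`-free. -/
def K2tFree (t : ℕ) {V : Type*} (G : SimpleGraph V) : Prop :=
  ¬ ∃ (x y : V) (u : Fin t → V), x ≠ y ∧ Function.Injective u ∧
      (∀ i, u i ≠ x ∧ u i ≠ y) ∧ ∀ i, G.Adj x (u i) ∧ G.Adj y (u i)

/-- The graph Turán number of `K_{2,t}` on `n` vertices. -/
noncomputable def exK2t (n t : ℕ) : ℕ :=
  sSup {m | ∃ G : SimpleGraph (Fin n), K2tFree t G ∧ G.edgeSet.ncard = m}


/-!
Inside each edge of `A` choose one pair of co-degree 1. Such a pair lies in no other edge, so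
distinct edges give distinct pairs, and a `K_{2,t}` in the graph of chosen pairs lifts to a
`K_{2,t}` trace of `H`: the edges through its `2t` pairs are pairwise distinct, and co-degree 1
forces each of them to meet the vertex set of the `K_{2,t}` in its pair only. Hence
`|A| ≤ ex(n, K_{2,t})`.

For the Kővári–Sós–Turán bound, two vertices of a `K_{2,t}`-free graph have at most `t - 1`
common neighbours, so counting paths of length two gives `∑ d(v)² ≤ 2e + (t - 1)n²`, and
Cauchy–Schwarz turns this into `4e² ≤ n(2e + (t - 1)n²)`, i.e.
`e ≤ (√(t - 1)/2) n^{3/2} + n/2`.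
-/

section Hypergraph

variable {V : Type*} [DecidableEq V] {H : Finset (Finset V)}

def IsOnlyEdgeThrough (H : Finset (Finset V)) (x y : V) (e : Finset V) : Prop :=
  H.filter (fun f => x ∈ f ∧ y ∈ f) = {e}

namespace IsOnlyEdgeThrough

variable {x y : V} {e : Finset V}

lemma mem_filter (h : IsOnlyEdgeThrough H x y e) : e ∈ H ∧ x ∈ e ∧ y ∈ e := by
  simpa using (Finset.ext_iff.mp h e).mpr (Finset.mem_singleton_self e)

lemma mem (h : IsOnlyEdgeThrough H x y e) : e ∈ H := h.mem_filter.1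

lemma left_mem (h : IsOnlyEdgeThrough H x y e) : x ∈ e := h.mem_filter.2.1

lemma right_mem (h : IsOnlyEdgeThrough H x y e) : y ∈ e := h.mem_filter.2.2

lemma eq_of_mem (h : IsOnlyEdgeThrough H x y e) {f : Finset V} (hf : f ∈ H) (hx : x ∈ f)
    (hy : y ∈ f) : f = e :=
  Finset.mem_singleton.mp (h ▸ Finset.mem_filter.mpr ⟨hf, hx, hy⟩)

lemma symm (h : IsOnlyEdgeThrough H x y e) : IsOnlyEdgeThrough H y x e := by
  simpa only [IsOnlyEdgeThrough, and_comm] using h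

end IsOnlyEdgeThrough

lemma codeg_eq_one_iff {x y : V} : codeg H x y = 1 ↔ ∃ e, IsOnlyEdgeThrough H x y e :=
  Finset.card_eq_one

lemma inter_insert_insert_image_eq_pair {t : ℕ} {x y : V} {u : Fin t → V}
    {e : Fin t → Finset V} (hx : ∀ i, IsOnlyEdgeThrough H x (u i) (e i))
    (he : Function.Injective e) {i : Fin t} (hy : y ∉ e i) :
    e i ∩ insert x (insert y (Finset.image u Finset.univ)) = {x, u i} := by
  ext z
  simp only [Finset.mem_inter, Finset.mem_insert, Finset.mem_image, Finset.mem_univ, true_and,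
    Finset.mem_singleton]
  constructor
  · rintro ⟨hz, rfl | rfl | ⟨j, rfl⟩⟩
    · exact Or.inl rfl
    · exact absurd hz hy
    · rw [he ((hx j).eq_of_mem (hx i).mem (hx i).left_mem hz)]
      exact Or.inr rfl
  · rintro (rfl | rfl)
    · exact ⟨(hx i).left_mem, Or.inl rfl⟩
    · exact ⟨(hx i).right_mem, Or.inr (Or.inr ⟨i, rfl⟩)⟩

lemma hasK2tTrace_of_isOnlyEdgeThrough {t : ℕ} {x y : V} {u : Fin t → V}
    {e f : Fin t → Finset V} (hxy : x ≠ y) (hu : Function.Injective u)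
    (hux : ∀ i, u i ≠ x ∧ u i ≠ y) (hex : ∀ i, IsOnlyEdgeThrough H x (u i) (e i))
    (hfy : ∀ i, IsOnlyEdgeThrough H y (u i) (f i)) (he : Function.Injective e)
    (hf : Function.Injective f) (hef : ∀ i j, e i ≠ f j) : HasK2tTrace t H := by
  have hy : ∀ i, y ∉ e i := fun i hy =>
    hef i i ((hfy i).eq_of_mem (hex i).mem hy (hex i).right_mem)
  have hx : ∀ i, x ∉ f i := fun i hx =>
    hef i i ((hex i).eq_of_mem (hfy i).mem hx (hfy i).right_mem).symm
  refine ⟨x, y, u, e, f, hxy, hu, hux, fun i => (hex i).mem, fun i => (hfy i).mem, he, hf, hef,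
    fun i => inter_insert_insert_image_eq_pair hex he (hy i), fun i => ?_⟩
  rw [Finset.insert_comm]
  exact inter_insert_insert_image_eq_pair hfy hf (hx i)

-- reducible, so that `convert` sees through it to the statement's filter, which is decidable
-- by a different instance
abbrev codegOneEdges (H : Finset (Finset V)) : Finset (Finset V) :=
  H.filter fun e => ∃ x ∈ e, ∃ y ∈ e, x ≠ y ∧ codeg H x y = 1

lemma exists_pair_of_mem_codegOneEdges {e : Finset V} (he : e ∈ codegOneEdges H) :
    ∃ z : Sym2 V, ¬ z.IsDiag ∧ ∀ a b, z = s(a, b) → IsOnlyEdgeThrough H a b e := by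
  obtain ⟨heH, x, hx, y, hy, hxy, hcodeg⟩ := Finset.mem_filter.mp he
  obtain ⟨f, hf⟩ := codeg_eq_one_iff.mp hcodeg
  rw [← hf.eq_of_mem heH hx hy] at hf
  refine ⟨s(x, y), Sym2.mk_isDiag_iff.not.mpr hxy, fun a b hab => ?_⟩
  rcases Sym2.eq_iff.mp hab with ⟨rfl, rfl⟩ | ⟨rfl, rfl⟩
  · exact hf
  · exact hf.symm

noncomputable def selectedPair (e : codegOneEdges H) : Sym2 V :=
  (exists_pair_of_mem_codegOneEdges e.2).choose

lemma not_isDiag_selectedPair (e : codegOneEdges H) : ¬ (selectedPair e).IsDiag :=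
  (exists_pair_of_mem_codegOneEdges e.2).choose_spec.1

lemma isOnlyEdgeThrough_of_selectedPair_eq {e : codegOneEdges H} {a b : V}
    (h : selectedPair e = s(a, b)) : IsOnlyEdgeThrough H a b e :=
  (exists_pair_of_mem_codegOneEdges e.2).choose_spec.2 a b h

lemma injective_selectedPair : Function.Injective (selectedPair (H := H)) := by
  intro e f h
  obtain ⟨a, b, hf⟩ := Sym2.exists.mp ⟨selectedPair f, rfl⟩
  have he := isOnlyEdgeThrough_of_selectedPair_eq (h.trans hf)
  exact Subtype.ext ((isOnlyEdgeThrough_of_selectedPair_eq hf).eq_of_mem he.mem he.left_mem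
    he.right_mem)

def selectedPairGraph (H : Finset (Finset V)) : SimpleGraph V :=
  SimpleGraph.fromEdgeSet (Set.range (selectedPair (H := H)))

lemma ncard_edgeSet_selectedPairGraph :
    (selectedPairGraph H).edgeSet.ncard = (codegOneEdges H).card := by
  have hdiag : Disjoint (Set.range (selectedPair (H := H))) Sym2.diagSet := by
    rw [Set.disjoint_left]
    rintro _ ⟨e, rfl⟩
    exact not_isDiag_selectedPair e
  rw [selectedPairGraph, SimpleGraph.edgeSet_fromEdgeSet, hdiag.sdiff_eq_left,
    Set.ncard_range_of_injective injective_selectedPair, Nat.card_eq_fintype_card,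
    Fintype.card_coe]

lemma exists_isOnlyEdgeThrough_of_adj {a b : V} (h : (selectedPairGraph H).Adj a b) :
    ∃ e : codegOneEdges H, selectedPair e = s(a, b) ∧ IsOnlyEdgeThrough H a b e := by
  obtain ⟨⟨e, he⟩, -⟩ := (SimpleGraph.fromEdgeSet_adj _).mp h
  exact ⟨e, he, isOnlyEdgeThrough_of_selectedPair_eq he⟩

lemma k2tFree_selectedPairGraph {t : ℕ} (hH : ¬ HasK2tTrace t H) :
    K2tFree t (selectedPairGraph H) := by
  rintro ⟨x, y, u, hxy, hu, hux, hadj⟩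
  choose e hep hex using fun i => exists_isOnlyEdgeThrough_of_adj (hadj i).1
  choose f hfp hfy using fun i => exists_isOnlyEdgeThrough_of_adj (hadj i).2
  refine hH (hasK2tTrace_of_isOnlyEdgeThrough hxy hu hux hex hfy ?_ ?_ ?_)
  · intro i j hij
    exact hu (Sym2.congr_right.mp (by rw [← hep i, ← hep j, Subtype.ext hij]))
  · intro i j hij
    exact hu (Sym2.congr_right.mp (by rw [← hfp i, ← hfp j, Subtype.ext hij]))
  · intro i j hij
    have hpair : s(x, u i) = s(y, u j) := by rw [← hep i, ← hfp j, Subtype.ext hij]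
    rcases Sym2.mem_iff.mp (hpair ▸ Sym2.mem_mk_left x (u i)) with h | h
    · exact hxy h
    · exact (hux j).1 h.symm

end Hypergraph

section Graph

open Finset

variable {V : Type*} [Fintype V] [DecidableEq V] {G : SimpleGraph V} [DecidableRel G.Adj]

lemma card_neighborFinset_inter_lt {t : ℕ} (hG : K2tFree t G) {x y : V} (hxy : x ≠ y) :
    #(G.neighborFinset x ∩ G.neighborFinset y) < t := by
  by_contra! hle
  obtain ⟨s, hs, rfl⟩ := exists_subset_card_eq hle
  refine hG ⟨x, y, fun i => (s.equivFin.symm i : V), hxy,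
    Subtype.val_injective.comp s.equivFin.symm.injective, fun i => ?_, fun i => ?_⟩
  all_goals
    have hi := hs (s.equivFin.symm i).2
    simp only [mem_inter, SimpleGraph.mem_neighborFinset] at hi
  · exact ⟨hi.1.ne', hi.2.ne'⟩
  · exact hi

lemma sum_degree_sq_eq_sum_card_inter :
    ∑ v, G.degree v ^ 2 = ∑ p : V × V, #(G.neighborFinset p.1 ∩ G.neighborFinset p.2) := by
  have := sum_card_bipartiteAbove_eq_sum_card_bipartiteBelow
    (fun (v : V) (p : V × V) => G.Adj v p.1 ∧ G.Adj v p.2) (s := univ) (t := univ)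
  convert this using 2 with v _ p
  · rw [sq, ← SimpleGraph.card_neighborFinset_eq_degree, ← card_product]
    congr 1
    ext
    simp [bipartiteAbove]
  · congr 1
    ext
    simp [bipartiteBelow, G.adj_comm]

lemma sum_degree_sq_le {s : ℕ}
    (hs : ∀ x y, x ≠ y → #(G.neighborFinset x ∩ G.neighborFinset y) ≤ s) :
    ∑ v, G.degree v ^ 2 ≤ 2 * #G.edgeFinset + s * Fintype.card V ^ 2 := by
  rw [sum_degree_sq_eq_sum_card_inter, ← G.sum_degrees_eq_twice_card_edges]
  calc ∑ p : V × V, #(G.neighborFinset p.1 ∩ G.neighborFinset p.2)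
      ≤ ∑ p : V × V, ((if p.1 = p.2 then G.degree p.1 else 0) + s) := by
        refine sum_le_sum fun ⟨x, y⟩ _ => ?_
        by_cases hxy : x = y
        · subst hxy
          simp
        · simpa [hxy] using hs x y hxy
    _ = ∑ v, G.degree v + s * Fintype.card V ^ 2 := by
        simp [sum_add_distrib, Fintype.sum_prod_type, sq, mul_comm]

lemma card_edgeFinset_le_of_card_inter_le {s : ℕ}
    (hs : ∀ x y, x ≠ y → #(G.neighborFinset x ∩ G.neighborFinset y) ≤ s) :
    (#G.edgeFinset : ℝ) ≤
      √s / 2 * (Fintype.card V : ℝ) ^ ((3 : ℝ) / 2) + Fintype.card V / 2 := by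
  set n : ℝ := (Fintype.card V : ℝ) with hn
  set e : ℝ := (#G.edgeFinset : ℝ) with he
  have hcs : (2 * e) ^ 2 ≤ n * (2 * e + s * n ^ 2) := by
    have hnat :=
      (sq_sum_le_card_mul_sum_sq (α := ℕ) (s := univ) (f := fun v => G.degree v)).trans
        (Nat.mul_le_mul_left _ (sum_degree_sq_le hs))
    rw [G.sum_degrees_eq_twice_card_edges, card_univ] at hnat
    rw [hn, he]
    exact_mod_cast hnat
  set m := √s * n ^ ((3 : ℝ) / 2)
  have hm : m ^ 2 = s * n ^ 3 := by
    rw [mul_pow, Real.sq_sqrt (Nat.cast_nonneg s), ← Real.rpow_natCast,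
      ← Real.rpow_mul (by positivity)]
    norm_num
  have hm0 : 0 ≤ m := by positivity
  have hn0 : 0 ≤ n := by positivity
  -- if `2e > m + n`, then `2e (2e - n) > (m + n) m ≥ m² = s n³`, contradicting `hcs`
  nlinarith

end Graph

lemma bddAbove_ncard_edgeSet_of_k2tFree (n t : ℕ) :
    BddAbove {m | ∃ G : SimpleGraph (Fin n), K2tFree t G ∧ G.edgeSet.ncard = m} := by
  refine ⟨Nat.card (Sym2 (Fin n)), ?_⟩
  rintro _ ⟨G, -, rfl⟩
  exact Set.ncard_le_card _

lemma ncard_edgeSet_le_exK2t {n t : ℕ} {G : SimpleGraph (Fin n)} (hG : K2tFree t G) :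
    G.edgeSet.ncard ≤ exK2t n t :=
  le_csSup (bddAbove_ncard_edgeSet_of_k2tFree n t) ⟨G, hG, rfl⟩

lemma exK2t_le_of_forall {n t : ℕ} {r : ℝ} (hr : 0 ≤ r)
    (h : ∀ G : SimpleGraph (Fin n), K2tFree t G → (G.edgeSet.ncard : ℝ) ≤ r) :
    (exK2t n t : ℝ) ≤ r := by
  rcases Set.eq_empty_or_nonempty
    {m | ∃ G : SimpleGraph (Fin n), K2tFree t G ∧ G.edgeSet.ncard = m} with hS | hS
  · simpa [exK2t, hS] using hr
  · obtain ⟨G, hG, hGm⟩ := Nat.sSup_mem hS (bddAbove_ncard_edgeSet_of_k2tFree n t)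
    rw [exK2t, ← hGm]
    exact h G hG

lemma exK2t_le (n t : ℕ) :
    (exK2t n t : ℝ) ≤ √((t : ℝ) - 1) / 2 * (n : ℝ) ^ ((3 : ℝ) / 2) + n / 2 := by
  classical
  refine exK2t_le_of_forall (by positivity) fun G hG => ?_
  have hs : ∀ x y, x ≠ y → (G.neighborFinset x ∩ G.neighborFinset y).card ≤ t - 1 :=
    fun x y hxy => Nat.le_sub_one_of_lt (card_neighborFinset_inter_lt hG hxy)
  -- at `t = 0` truncated subtraction and `Real.sqrt` of a negative number both give `0`
  have hsqrt : √((t - 1 : ℕ) : ℝ) = √((t : ℝ) - 1) := by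
    obtain rfl | ht := t.eq_zero_or_pos
    · simp [Real.sqrt_eq_zero_of_nonpos]
    · rw [Nat.cast_pred ht]
  rw [← G.coe_edgeFinset, Set.ncard_coe_finset]
  simpa [hsqrt] using card_edgeFinset_le_of_card_inter_le hs

open Asymptotics Filter in
lemma isLittleO_id_rpow_atTop {r : ℝ} (hr : 1 < r) :
    (fun x : ℝ => x) =o[atTop] fun x => x ^ r := by
  refine (isLittleO_iff_tendsto' ?_).mpr ?_
  · filter_upwards [eventually_gt_atTop 0] with x hx h
    exact absurd h (Real.rpow_pos_of_pos hx r).ne'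
  · refine (tendsto_rpow_neg_atTop (sub_pos.mpr hr)).congr' ?_
    filter_upwards [eventually_gt_atTop 0] with x hx
    rw [neg_sub, Real.rpow_sub hx, Real.rpow_one]

theorem card_codegOneEdges_le_exK2t {n t : ℕ} {H : Finset (Finset (Fin n))}
    (hH : ¬ HasK2tTrace t H) : (codegOneEdges H).card ≤ exK2t n t :=
  ncard_edgeSet_selectedPairGraph (H := H) ▸
    ncard_edgeSet_le_exK2t (k2tFree_selectedPairGraph hH)

open Asymptotics Filter in
theorem stmt_18_general (t : ℕ) :
    (∀ n : ℕ, ∀ H : Finset (Finset (Fin n)), (∀ e ∈ H, e.card = 3) →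
      ¬ HasK2tTrace t H →
      (H.filter fun e => ∃ x ∈ e, ∃ y ∈ e, x ≠ y ∧ codeg H x y = 1).card ≤ exK2t n t) ∧
    ∃ g : ℕ → ℝ, g =o[atTop] (fun n : ℕ => (n : ℝ) ^ ((3 : ℝ) / 2)) ∧
      ∀ n : ℕ, (exK2t n t : ℝ) ≤ Real.sqrt ((t : ℝ) - 1) / 2 * (n : ℝ) ^ ((3 : ℝ) / 2) + g n := by
  refine ⟨fun n H _ hH => by convert card_codegOneEdges_le_exK2t hH, fun n => (n : ℝ) / 2, ?_,
    fun n => exK2t_le n t⟩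
  simpa [div_eq_inv_mul, Function.comp_def] using
    ((isLittleO_id_rpow_atTop (by norm_num)).comp_tendsto
      tendsto_natCast_atTop_atTop).const_mul_left (1 / 2 : ℝ)

open Asymptotics Filter in
/-- if `H` is 3-uniform with no `K_{2,t}` trace (`t ≥ 3`) and `A` is the
set of edges of `H` containing a pair of co-degree exactly 1, then
`|A| ≤ ex(n, K_{2,t})`, which in turn is at most `(√(t−1)/2)n^{3/2} + o(n^{3/2})`. -/
theorem stmt_18 (t : ℕ) (ht : 3 ≤ t) :
    (∀ n : ℕ, ∀ H : Finset (Finset (Fin n)), (∀ e ∈ H, e.card = 3) →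
      ¬ HasK2tTrace t H →
      (H.filter fun e => ∃ x ∈ e, ∃ y ∈ e, x ≠ y ∧ codeg H x y = 1).card ≤ exK2t n t) ∧
    ∃ g : ℕ → ℝ, g =o[atTop] (fun n : ℕ => (n : ℝ) ^ ((3 : ℝ) / 2)) ∧
      ∀ n : ℕ, (exK2t n t : ℝ) ≤ Real.sqrt ((t : ℝ) - 1) / 2 * (n : ℝ) ^ ((3 : ℝ) / 2) + g n :=
  stmt_18_general t
end

section
/- Let t ≥ 3 and suppose x, y are vertices of a 3-uniform hypergraph B with co-degrees at most 3t−3, and u_1, …, u_t ∈ N_1(x) ∩ N_1(y) are such that no edge of B equals {x, y, u_i}, and {u_1,…,u_t} is independent in the auxiliary graph where u_i u_j is adjacent iff {x,u_i,u_j} ∈ B or {y,u_i,u_j} ∈ B. Then B contains K_{2,t} as a trace with base vertices x, y, u_1, …, u_t. -/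
lemma trace_inter {V : Type*} [DecidableEq V] {t : ℕ}
    (B : Finset (Finset V)) (h3 : ∀ e ∈ B, e.card = 3)
    (x y : V) (hxy : x ≠ y) (u : Fin t → V) (hu : Function.Injective u)
    (huxy : ∀ i, u i ≠ x ∧ u i ≠ y)
    (hnoedge : ∀ i, ({x, y, u i} : Finset V) ∉ B)
    (hindep : ∀ i j, i ≠ j → ({x, u i, u j} : Finset V) ∉ B)
    {e : Finset V} (heB : e ∈ B) (i : Fin t) (hx : x ∈ e) (hui : u i ∈ e) :
    e ∩ insert x (insert y (Finset.image u Finset.univ)) = {x, u i} := by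
  ext a
  simp only [Finset.mem_inter, Finset.mem_insert, Finset.mem_image, Finset.mem_univ,
    true_and, Finset.mem_singleton]
  constructor
  · rintro ⟨hae, rfl | rfl | ⟨j, rfl⟩⟩
    · exact Or.inl rfl
    · exfalso
      have hsub : ({x, a, u i} : Finset V) ⊆ e := by
        intro b hb
        simp only [Finset.mem_insert, Finset.mem_singleton] at hb
        rcases hb with rfl | rfl | rfl <;> assumption
      have hcard : ({x, a, u i} : Finset V).card = 3 := by
        rw [Finset.card_insert_of_notMem, Finset.card_insert_of_notMem,
          Finset.card_singleton]
        · simp [(huxy i).2.symm]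
        · simp [hxy, (huxy i).1.symm]
      have := Finset.eq_of_subset_of_card_le hsub (by rw [h3 e heB, hcard])
      exact hnoedge i (this ▸ heB)
    · by_cases hij : j = i
      · exact Or.inr (by rw [hij])
      · exfalso
        have hsub : ({x, u i, u j} : Finset V) ⊆ e := by
          intro b hb
          simp only [Finset.mem_insert, Finset.mem_singleton] at hb
          rcases hb with rfl | rfl | rfl <;> assumption
        have hcard : ({x, u i, u j} : Finset V).card = 3 := by
          rw [Finset.card_insert_of_notMem, Finset.card_insert_of_notMem,
            Finset.card_singleton]
          · simp only [Finset.mem_singleton]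
            exact fun h => hij (hu h).symm
          · simp [(huxy i).1.symm, (huxy j).1.symm]
        have := Finset.eq_of_subset_of_card_le hsub (by rw [h3 e heB, hcard])
        exact hindep i j (fun h => hij h.symm) (this ▸ heB)
  · rintro (rfl | rfl)
    · exact ⟨hx, Or.inl rfl⟩
    · exact ⟨hui, Or.inr (Or.inr ⟨i, rfl⟩)⟩

/-- if `x ≠ y`, the `u i` are common neighbors of `x` and `y`, no edge
equals `{x,y,u i}`, and `{u 1, …, u t}` is independent in the auxiliary graph
(`{x,u i,u j} ∉ B` and `{y,u i,u j} ∉ B` for `i ≠ j`), then `B` contains a `K_{2,t}`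
trace with base vertices `x, y, u 1, …, u t`. -/
theorem stmt_19 {V : Type*} [DecidableEq V] (t : ℕ) (ht : 3 ≤ t)
    (B : Finset (Finset V)) (h3 : ∀ e ∈ B, e.card = 3)
    (hcodeg : ∀ a b : V, a ≠ b → codeg B a b ≤ 3 * t - 3)
    (x y : V) (hxy : x ≠ y) (u : Fin t → V) (hu : Function.Injective u)
    (huxy : ∀ i, u i ≠ x ∧ u i ≠ y)
    (hux : ∀ i, ∃ e ∈ B, x ∈ e ∧ u i ∈ e)
    (huy : ∀ i, ∃ e ∈ B, y ∈ e ∧ u i ∈ e)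
    (hnoedge : ∀ i, ({x, y, u i} : Finset V) ∉ B)
    (hindep : ∀ i j, i ≠ j →
      ({x, u i, u j} : Finset V) ∉ B ∧ ({y, u i, u j} : Finset V) ∉ B) :
    ∃ e f : Fin t → Finset V,
      (∀ i, e i ∈ B) ∧ (∀ i, f i ∈ B) ∧
      Function.Injective e ∧ Function.Injective f ∧ (∀ i j, e i ≠ f j) ∧
      (∀ i, e i ∩ insert x (insert y (Finset.image u Finset.univ)) = {x, u i}) ∧
      (∀ i, f i ∩ insert x (insert y (Finset.image u Finset.univ)) = {y, u i}) := by
  choose e heB hex heu using hux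
  choose f hfB hfy hfu using huy
  have hnoedge' : ∀ i, ({y, x, u i} : Finset V) ∉ B := by
    intro i h
    apply hnoedge i
    have : ({y, x, u i} : Finset V) = {x, y, u i} := by
      ext a; simp; tauto
    rwa [this] at h
  have he : ∀ i, e i ∩ insert x (insert y (Finset.image u Finset.univ)) = {x, u i} :=
    fun i => trace_inter B h3 x y hxy u hu huxy hnoedge
      (fun i j hij => (hindep i j hij).1) (heB i) i (hex i) (heu i)
  have hf : ∀ i, f i ∩ insert y (insert x (Finset.image u Finset.univ)) = {y, u i} :=
    fun i => trace_inter B h3 y x hxy.symm u hu (fun i => ⟨(huxy i).2, (huxy i).1⟩)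
      hnoedge' (fun i j hij => (hindep i j hij).2) (hfB i) i (hfy i) (hfu i)
  have hf' : ∀ i, f i ∩ insert x (insert y (Finset.image u Finset.univ)) = {y, u i} := by
    intro i
    rw [← hf i]
    congr 1
    ext a; simp; tauto
  refine ⟨e, f, heB, hfB, ?_, ?_, ?_, he, hf'⟩
  · intro i j hij
    have := (he i).symm.trans (by rw [hij, he j])
    have : u i ∈ ({x, u j} : Finset V) := by
      rw [← this]; simp
    simp only [Finset.mem_insert, Finset.mem_singleton] at this
    rcases this with h | h
    · exact absurd h (huxy i).1
    · exact hu h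
  · intro i j hij
    have := (hf' i).symm.trans (by rw [hij, hf' j])
    have : u i ∈ ({y, u j} : Finset V) := by
      rw [← this]; simp
    simp only [Finset.mem_insert, Finset.mem_singleton] at this
    rcases this with h | h
    · exact absurd h (huxy i).2
    · exact hu h
  · intro i j hij
    have h1 := he i
    have h2 := hf' j
    rw [hij, h2] at h1
    have : x ∈ ({y, u j} : Finset V) := by rw [h1]; simp
    simp only [Finset.mem_insert, Finset.mem_singleton] at this
    rcases this with h | h
    · exact hxy h
    · exact (huxy j).1 h.symm
end
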